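/- arXiv:2412.20827 — 10 statements merged into one kernel-verified Lean document; each statement's English description precedes it below -/
import Mathlib

section
/- For A ∈ ℝ^{n×n}, the following are equivalent: (i) the 2n×2n block matrix [[E, 0],[A, E]] has rank n + r (i.e. the pair {E, A} is impulse-free); (ii) the (n−r)×(n−r) matrix A₄ = E₁⊥⁺ A E₂⊥⁺ᵀ is invertible; (iii) the (n−r)×(n−r) matrix E₁⊥ᵀ A E₂⊥ is invertible. -/
open Matrix

/-- Moore–Penrose-type left pseudoinverse `M⁺ = (MᵀM)⁻¹Mᵀ` of a full-column-rank matrix. -/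
noncomputable def pinv {m p : Type*} [Fintype m] [Fintype p] [DecidableEq p]
    (M : Matrix m p ℝ) : Matrix p m ℝ :=
  (Mᵀ * M)⁻¹ * Mᵀ

lemma isUnit_det_iff_rank_eq_card {p : Type*} [Fintype p] [DecidableEq p] (M : Matrix p p ℝ) :
    IsUnit M.det ↔ M.rank = Fintype.card p := by
  constructor
  · intro h
    exact Matrix.rank_of_isUnit M ((Matrix.isUnit_iff_isUnit_det M).mpr h)
  · intro h
    rw [isUnit_iff_ne_zero]
    intro hdet
    obtain ⟨v, hv, hMv⟩ := (Matrix.exists_mulVec_eq_zero_iff).mpr hdet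
    have hsurj : Function.Surjective M.mulVecLin := by
      rw [← LinearMap.range_eq_top]
      apply Submodule.eq_top_of_finrank_eq
      rw [← Matrix.rank, h, Module.finrank_pi]
    have hinj : Function.Injective M.mulVecLin :=
      (LinearMap.injective_iff_surjective).mpr hsurj
    exact hv (hinj (show M.mulVecLin v = M.mulVecLin 0 by simp [hMv]))

noncomputable def prodSubEquiv {M N : Type*} [AddCommGroup M] [AddCommGroup N]
    [Module ℝ M] [Module ℝ N] (p : Submodule ℝ M) (q : Submodule ℝ N) :
    ↥(p.prod q) ≃ₗ[ℝ] ↥p × ↥q where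
  toFun x := (⟨x.1.1, x.2.1⟩, ⟨x.1.2, x.2.2⟩)
  invFun z := ⟨(z.1.1, z.2.1), ⟨z.1.2, z.2.2⟩⟩
  map_add' _ _ := rfl
  map_smul' _ _ := rfl
  left_inv _ := rfl
  right_inv _ := rfl

lemma range_prodMap' {M N M' N' : Type*} [AddCommGroup M] [AddCommGroup N] [AddCommGroup M']
    [AddCommGroup N'] [Module ℝ M] [Module ℝ N] [Module ℝ M'] [Module ℝ N']
    (f : M →ₗ[ℝ] M') (g : N →ₗ[ℝ] N') :
    LinearMap.range (f.prodMap g) = (LinearMap.range f).prod (LinearMap.range g) := by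
  ext ⟨a, b⟩
  simp only [LinearMap.mem_range, Submodule.mem_prod, LinearMap.prodMap_apply, Prod.ext_iff,
    Prod.exists]
  exact ⟨fun ⟨x, y, h1, h2⟩ => ⟨⟨x, h1⟩, ⟨y, h2⟩⟩, fun ⟨⟨x, hx⟩, ⟨y, hy⟩⟩ => ⟨x, y, hx, hy⟩⟩

lemma rank_fromBlocks_diag {m n : Type*} [Fintype m] [Fintype n] [DecidableEq m] [DecidableEq n]
    (A : Matrix m m ℝ) (D : Matrix n n ℝ) :
    (fromBlocks A 0 0 D).rank = A.rank + D.rank := by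
  classical
  set e := LinearEquiv.sumArrowLequivProdArrow m n ℝ ℝ with he
  have hcomp : (fromBlocks A 0 0 D).mulVecLin
      = (e.symm.toLinearMap ∘ₗ (A.mulVecLin.prodMap D.mulVecLin)) ∘ₗ e.toLinearMap := by
    apply LinearMap.ext; intro x
    funext i
    cases i <;>
      simp [e, Matrix.mulVecLin_apply, Matrix.mulVec, dotProduct,
        Fintype.sum_sum_type, Matrix.fromBlocks, LinearEquiv.sumArrowLequivProdArrow]
  have hr : (fromBlocks A 0 0 D).rank
      = Module.finrank ℝ ↥(LinearMap.range (A.mulVecLin.prodMap D.mulVecLin)) := by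
    rw [Matrix.rank, hcomp, LinearMap.range_comp_of_range_eq_top _ (LinearEquiv.range e),
      LinearMap.range_comp]
    exact LinearEquiv.finrank_map_eq e.symm _
  rw [hr, range_prodMap', (prodSubEquiv _ _).finrank_eq, Module.finrank_prod]
  rfl

lemma rank_mul_mul_eq {a b : Type*} [Fintype a] [Fintype b] [DecidableEq a] [DecidableEq b]
    (L : Matrix b a ℝ) (L' : Matrix a b ℝ) (R : Matrix a b ℝ) (R' : Matrix b a ℝ)
    (F : Matrix a a ℝ) (hL : L' * L = 1) (hR : R * R' = 1) :
    (L * F * R).rank = F.rank := by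
  apply le_antisymm
  · exact le_trans (Matrix.rank_mul_le_left _ _) (Matrix.rank_mul_le_right _ _)
  · have h : L' * (L * F * R) * R' = (L' * L) * F * (R * R') := by
      simp only [Matrix.mul_assoc]
    calc F.rank = (L' * (L * F * R) * R').rank := by rw [h, hL, hR, Matrix.one_mul, Matrix.mul_one]
    _ ≤ _ := le_trans (Matrix.rank_mul_le_left _ _) (Matrix.rank_mul_le_right _ _)

def eRow (α γ : Type*) : (α ⊕ α) ⊕ (γ ⊕ γ) ≃ (α ⊕ γ) ⊕ (α ⊕ γ) where
  toFun x := match x with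
    | .inl (.inl i) => .inl (.inl i)
    | .inl (.inr i) => .inr (.inl i)
    | .inr (.inl j) => .inr (.inr j)
    | .inr (.inr j) => .inl (.inr j)
  invFun x := match x with
    | .inl (.inl i) => .inl (.inl i)
    | .inl (.inr j) => .inr (.inr j)
    | .inr (.inl i) => .inl (.inr i)
    | .inr (.inr j) => .inr (.inl j)
  left_inv x := by rcases x with (i | i) | (j | j) <;> rfl
  right_inv x := by rcases x with (i | j) | (i | j) <;> rfl

def eCol (α γ : Type*) : (α ⊕ α) ⊕ (γ ⊕ γ) ≃ (α ⊕ γ) ⊕ (α ⊕ γ) where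
  toFun x := match x with
    | .inl (.inl i) => .inl (.inl i)
    | .inl (.inr i) => .inr (.inl i)
    | .inr (.inl j) => .inl (.inr j)
    | .inr (.inr j) => .inr (.inr j)
  invFun x := match x with
    | .inl (.inl i) => .inl (.inl i)
    | .inl (.inr j) => .inr (.inl j)
    | .inr (.inl i) => .inl (.inr i)
    | .inr (.inr j) => .inr (.inr j)
  left_inv x := by rcases x with (i | i) | (j | j) <;> rfl
  right_inv x := by rcases x with (i | j) | (i | j) <;> rfl

-- The heart: rank of fromBlocks D 0 C D with D = diag(1,0), C = diag(0, A4)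
lemma rank_special {α γ : Type*} [Fintype α] [Fintype γ] [DecidableEq α] [DecidableEq γ]
    (A4 : Matrix γ γ ℝ) :
    (fromBlocks (fromBlocks (1 : Matrix α α ℝ) 0 0 (0 : Matrix γ γ ℝ)) 0
      (fromBlocks 0 0 0 A4) (fromBlocks (1 : Matrix α α ℝ) 0 0 (0 : Matrix γ γ ℝ))).rank
      = Fintype.card α + Fintype.card α + A4.rank := by
  set D : Matrix (α ⊕ γ) (α ⊕ γ) ℝ := fromBlocks 1 0 0 0 with hD
  set C : Matrix (α ⊕ γ) (α ⊕ γ) ℝ := fromBlocks 0 0 0 A4 with hC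
  have hsub : (fromBlocks D 0 C D).submatrix (eRow α γ) (eCol α γ)
      = fromBlocks (1 : Matrix (α ⊕ α) (α ⊕ α) ℝ) 0 0 (fromBlocks A4 0 0 0) := by
    ext i j
    rcases i with (i | i) | (i | i) <;> rcases j with (j | j) | (j | j) <;>
      simp [eRow, eCol, hD, hC, Matrix.one_apply, Sum.inl.injEq, Sum.inr.injEq]
  have h1 : ((fromBlocks D 0 C D).submatrix (eRow α γ) (eCol α γ)).rank
      = (fromBlocks D 0 C D).rank := by
    have := Matrix.rank_reindex (eRow α γ).symm (eCol α γ).symm (fromBlocks D 0 C D)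
    rwa [Matrix.reindex_apply, Equiv.symm_symm, Equiv.symm_symm] at this
  rw [← h1, hsub, rank_fromBlocks_diag, rank_fromBlocks_diag, Matrix.rank_one,
    Matrix.rank_zero, Fintype.card_sum, add_zero]

/-- the pair `{E, A}` is impulse-free (i.e. `rank [[E,0],[A,E]] = n + r`)
iff `A₄ = E₁⊥⁺ A E₂⊥⁺ᵀ` is invertible iff `E₁⊥ᵀ A E₂⊥` is invertible. -/
theorem stmt1 (n r : ℕ) (hr : 0 < r) (hrn : r < n)
    (E : Matrix (Fin n) (Fin n) ℝ)
    (E₁ E₂ : Matrix (Fin n) (Fin r) ℝ)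
    (E₁b E₂b : Matrix (Fin n) (Fin (n - r)) ℝ)
    (hErank : E.rank = r)
    (hskel : E = E₁ * E₂ᵀ)
    (hE₁rank : E₁.rank = r) (hE₂rank : E₂.rank = r)
    (horth₁ : E₁ᵀ * E₁b = 0) (horth₂ : E₂ᵀ * E₂b = 0)
    (hinv₁ : ∃ M : Matrix (Fin r ⊕ Fin (n - r)) (Fin n) ℝ,
      fromCols E₁ E₁b * M = 1 ∧ M * fromCols E₁ E₁b = 1)
    (hinv₂ : ∃ M : Matrix (Fin r ⊕ Fin (n - r)) (Fin n) ℝ,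
      fromCols E₂ E₂b * M = 1 ∧ M * fromCols E₂ E₂b = 1)
    (A : Matrix (Fin n) (Fin n) ℝ) :
    ((fromBlocks E 0 A E).rank = n + r ↔
      IsUnit (pinv E₁b * A * (pinv E₂b)ᵀ).det) ∧
    (IsUnit (pinv E₁b * A * (pinv E₂b)ᵀ).det ↔ IsUnit (E₁bᵀ * A * E₂b).det) := by
  classical
  obtain ⟨M₁, hPM₁, hMP₁⟩ := hinv₁
  obtain ⟨M₂, hPM₂, hMP₂⟩ := hinv₂
  set X₁ := M₁.toRows₁ with hX₁def
  set Y₁ := M₁.toRows₂ with hY₁def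
  set X₂ := M₂.toRows₁ with hX₂def
  set Y₂ := M₂.toRows₂ with hY₂def
  have hM₁ : M₁ = fromRows X₁ Y₁ := (fromRows_toRows M₁).symm
  have hM₂ : M₂ = fromRows X₂ Y₂ := (fromRows_toRows M₂).symm
  have hblocks₁ : fromBlocks (X₁ * E₁) (X₁ * E₁b) (Y₁ * E₁) (Y₁ * E₁b)
      = fromBlocks 1 0 0 1 := by
    rw [← fromRows_mul_fromCols, ← hM₁, hMP₁, fromBlocks_one]
  have hblocks₂ : fromBlocks (X₂ * E₂) (X₂ * E₂b) (Y₂ * E₂) (Y₂ * E₂b)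
      = fromBlocks 1 0 0 1 := by
    rw [← fromRows_mul_fromCols, ← hM₂, hMP₂, fromBlocks_one]
  obtain ⟨hX₁E₁, -, hY₁E₁, hY₁E₁b⟩ := fromBlocks_inj.mp hblocks₁
  obtain ⟨hX₂E₂, -, hY₂E₂, hY₂E₂b⟩ := fromBlocks_inj.mp hblocks₂
  have hsum₁ : E₁ * X₁ + E₁b * Y₁ = 1 := by
    rw [← fromCols_mul_fromRows, ← hM₁]; exact hPM₁
  have hsum₂ : E₂ * X₂ + E₂b * Y₂ = 1 := by
    rw [← fromCols_mul_fromRows, ← hM₂]; exact hPM₂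
  -- Gram matrices are invertible
  have horthT₁ : E₁bᵀ * E₁ = 0 := by
    have := congrArg Matrix.transpose horth₁
    simpa [Matrix.transpose_mul] using this
  have horthT₂ : E₂bᵀ * E₂ = 0 := by
    have := congrArg Matrix.transpose horth₂
    simpa [Matrix.transpose_mul] using this
  have hrankE₁b : E₁b.rank = n - r := by
    apply le_antisymm
    · simpa using E₁b.rank_le_card_width
    · calc n - r = ((1 : Matrix (Fin (n - r)) (Fin (n - r)) ℝ)).rank := by
            rw [Matrix.rank_one, Fintype.card_fin]
      _ = (Y₁ * E₁b).rank := by rw [hY₁E₁b]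
      _ ≤ E₁b.rank := Matrix.rank_mul_le_right _ _
  have hrankE₂b : E₂b.rank = n - r := by
    apply le_antisymm
    · simpa using E₂b.rank_le_card_width
    · calc n - r = ((1 : Matrix (Fin (n - r)) (Fin (n - r)) ℝ)).rank := by
            rw [Matrix.rank_one, Fintype.card_fin]
      _ = (Y₂ * E₂b).rank := by rw [hY₂E₂b]
      _ ≤ E₂b.rank := Matrix.rank_mul_le_right _ _
  have hGram₁ : IsUnit (E₁bᵀ * E₁b).det := by
    rw [isUnit_det_iff_rank_eq_card, Matrix.rank_transpose_mul_self, hrankE₁b, Fintype.card_fin]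
  have hGram₂ : IsUnit (E₂bᵀ * E₂b).det := by
    rw [isUnit_det_iff_rank_eq_card, Matrix.rank_transpose_mul_self, hrankE₂b, Fintype.card_fin]
  -- identification of the pseudoinverses
  have hpinv₁E₁ : pinv E₁b * E₁ = 0 := by
    rw [pinv, Matrix.mul_assoc, horthT₁, Matrix.mul_zero]
  have hpinv₂E₂ : pinv E₂b * E₂ = 0 := by
    rw [pinv, Matrix.mul_assoc, horthT₂, Matrix.mul_zero]
  have hpinv₁E₁b : pinv E₁b * E₁b = 1 := by
    rw [pinv, Matrix.mul_assoc]; exact Matrix.nonsing_inv_mul _ hGram₁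
  have hpinv₂E₂b : pinv E₂b * E₂b = 1 := by
    rw [pinv, Matrix.mul_assoc]; exact Matrix.nonsing_inv_mul _ hGram₂
  have hpinv₁ : pinv E₁b = Y₁ := by
    calc pinv E₁b = pinv E₁b * (E₁ * X₁ + E₁b * Y₁) := by rw [hsum₁, Matrix.mul_one]
    _ = (pinv E₁b * E₁) * X₁ + (pinv E₁b * E₁b) * Y₁ := by
        rw [Matrix.mul_add, ← Matrix.mul_assoc, ← Matrix.mul_assoc]
    _ = Y₁ := by rw [hpinv₁E₁, hpinv₁E₁b, Matrix.zero_mul, Matrix.one_mul, zero_add]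
  have hpinv₂ : pinv E₂b = Y₂ := by
    calc pinv E₂b = pinv E₂b * (E₂ * X₂ + E₂b * Y₂) := by rw [hsum₂, Matrix.mul_one]
    _ = (pinv E₂b * E₂) * X₂ + (pinv E₂b * E₂b) * Y₂ := by
        rw [Matrix.mul_add, ← Matrix.mul_assoc, ← Matrix.mul_assoc]
    _ = Y₂ := by rw [hpinv₂E₂, hpinv₂E₂b, Matrix.zero_mul, Matrix.one_mul, zero_add]
  -- second equivalence
  have hpart2 : IsUnit (pinv E₁b * A * (pinv E₂b)ᵀ).det ↔ IsUnit (E₁bᵀ * A * E₂b).det := by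
    have hkey : pinv E₁b * A * (pinv E₂b)ᵀ
        = (E₁bᵀ * E₁b)⁻¹ * ((E₁bᵀ * A * E₂b) * ((E₂bᵀ * E₂b)⁻¹)ᵀ) := by
      simp only [pinv, Matrix.transpose_mul, Matrix.transpose_transpose, Matrix.mul_assoc]
    have u1 : IsUnit (E₁bᵀ * E₁b)⁻¹.det := Matrix.isUnit_nonsing_inv_det _ hGram₁
    have u2 : IsUnit ((E₂bᵀ * E₂b)⁻¹)ᵀ.det := by
      rw [Matrix.det_transpose]; exact Matrix.isUnit_nonsing_inv_det _ hGram₂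
    rw [hkey, Matrix.det_mul, Matrix.det_mul, IsUnit.mul_iff, IsUnit.mul_iff]
    exact ⟨fun h => h.2.1, fun h => ⟨u1, h, u2⟩⟩
  refine ⟨?_, hpart2⟩
  -- first equivalence
  rw [hpinv₁, hpinv₂]
  set D : Matrix (Fin r ⊕ Fin (n-r)) (Fin r ⊕ Fin (n-r)) ℝ := fromBlocks 1 0 0 0 with hDdef
  have hME₁ : M₁ * E₁ = fromRows 1 0 := by rw [hM₁, fromRows_mul, hX₁E₁, hY₁E₁]
  have hME₂ : M₂ * E₂ = fromRows 1 0 := by rw [hM₂, fromRows_mul, hX₂E₂, hY₂E₂]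
  have hD : M₁ * E * M₂ᵀ = D := by
    have h1 : M₁ * E * M₂ᵀ = (M₁ * E₁) * ((M₂ * E₂)ᵀ)ᵀᵀ := by
      rw [hskel]; simp only [Matrix.transpose_transpose, Matrix.transpose_mul,
        Matrix.mul_assoc]
    rw [h1, Matrix.transpose_transpose, hME₁, hME₂, transpose_fromRows,
      Matrix.transpose_one, Matrix.transpose_zero, fromRows_mul_fromCols, hDdef]
    simp
  set At := M₁ * A * M₂ᵀ with hAtdef
  set A₄ := Y₁ * A * Y₂ᵀ with hA₄def
  have hAt : At = fromBlocks (X₁ * A * X₂ᵀ) (X₁ * A * Y₂ᵀ) (Y₁ * A * X₂ᵀ) A₄ := by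
    rw [hAtdef, hA₄def, hM₁, hM₂, transpose_fromRows, fromRows_mul, fromRows_mul_fromCols]
  -- the key matrix identity
  have hkeyC : At - At * D - D * (At - At * D) = fromBlocks 0 0 0 A₄ := by
    have h1 : At * D = fromBlocks (X₁ * A * X₂ᵀ) 0 (Y₁ * A * X₂ᵀ) 0 := by
      rw [hAt, hDdef, fromBlocks_multiply]; simp
    have h2 : At - At * D = fromBlocks 0 (X₁ * A * Y₂ᵀ) 0 A₄ := by
      rw [h1, hAt]
      ext i j
      rcases i with i | i <;> rcases j with j | j <;> simp [Matrix.sub_apply]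
    have h3 : D * (At - At * D) = fromBlocks 0 (X₁ * A * Y₂ᵀ) 0 0 := by
      rw [h2, hDdef, fromBlocks_multiply]; simp
    rw [h3, h2]
    ext i j
    rcases i with i | i <;> rcases j with j | j <;> simp [Matrix.sub_apply]
  -- the big transformations
  set F := fromBlocks E 0 A E with hFdef
  set L := fromBlocks M₁ 0 0 M₁ with hLdef
  set L' := fromBlocks (fromCols E₁ E₁b) 0 0 (fromCols E₁ E₁b) with hL'def
  set Rt := fromBlocks M₂ᵀ 0 0 M₂ᵀ with hRtdef
  set Rt' := fromBlocks (fromCols E₂ E₂b)ᵀ 0 0 (fromCols E₂ E₂b)ᵀ with hRt'def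
  have hL'L : L' * L = 1 := by
    rw [hL'def, hLdef, fromBlocks_multiply]
    simp only [Matrix.mul_zero, Matrix.zero_mul, add_zero, zero_add, hPM₁]
    exact fromBlocks_one
  have hRtRt' : Rt * Rt' = 1 := by
    have h : M₂ᵀ * (fromCols E₂ E₂b)ᵀ = 1 := by
      rw [← Matrix.transpose_mul, hPM₂, Matrix.transpose_one]
    rw [hRtdef, hRt'def, fromBlocks_multiply]
    simp only [Matrix.mul_zero, Matrix.zero_mul, add_zero, zero_add, h]
    exact fromBlocks_one
  have hG₀ : L * F * Rt = fromBlocks D 0 At D := by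
    rw [hLdef, hFdef, hRtdef, fromBlocks_multiply, fromBlocks_multiply]
    simp only [Matrix.mul_zero, Matrix.zero_mul, add_zero, zero_add]
    rw [hD, ← hAtdef]
  set L₂ : Matrix ((Fin r ⊕ Fin (n-r)) ⊕ (Fin r ⊕ Fin (n-r))) ((Fin r ⊕ Fin (n-r)) ⊕ (Fin r ⊕ Fin (n-r))) ℝ :=
    fromBlocks 1 0 (-At) 1 with hL₂def
  set L₂' : Matrix ((Fin r ⊕ Fin (n-r)) ⊕ (Fin r ⊕ Fin (n-r))) ((Fin r ⊕ Fin (n-r)) ⊕ (Fin r ⊕ Fin (n-r))) ℝ :=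
    fromBlocks 1 0 At 1 with hL₂'def
  set R₂ : Matrix ((Fin r ⊕ Fin (n-r)) ⊕ (Fin r ⊕ Fin (n-r))) ((Fin r ⊕ Fin (n-r)) ⊕ (Fin r ⊕ Fin (n-r))) ℝ :=
    fromBlocks 1 0 (-(At - At * D)) 1 with hR₂def
  set R₂' : Matrix ((Fin r ⊕ Fin (n-r)) ⊕ (Fin r ⊕ Fin (n-r))) ((Fin r ⊕ Fin (n-r)) ⊕ (Fin r ⊕ Fin (n-r))) ℝ :=
    fromBlocks 1 0 (At - At * D) 1 with hR₂'def
  have hL₂L₂ : L₂' * L₂ = 1 := by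
    rw [hL₂'def, hL₂def, fromBlocks_multiply]
    simp only [Matrix.mul_zero, Matrix.zero_mul, add_zero, zero_add, Matrix.mul_one,
      Matrix.one_mul, Matrix.mul_neg, Matrix.neg_mul, neg_zero]
    rw [show At + -At = 0 by abel]
    exact fromBlocks_one
  have hR₂R₂ : R₂ * R₂' = 1 := by
    rw [hR₂def, hR₂'def, fromBlocks_multiply]
    simp only [Matrix.mul_zero, Matrix.zero_mul, add_zero, zero_add, Matrix.mul_one,
      Matrix.one_mul, Matrix.mul_neg, Matrix.neg_mul, neg_zero]
    rw [show -(At - At * D) + (At - At * D) = 0 by abel]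
    exact fromBlocks_one
  have hG₂ : L₂ * (L * F * Rt) * R₂ = fromBlocks D 0 (fromBlocks 0 0 0 A₄) D := by
    rw [hG₀, hL₂def, hR₂def, fromBlocks_multiply, fromBlocks_multiply]
    rw [← hkeyC, fromBlocks_inj]
    refine ⟨?_, ?_, ?_, ?_⟩ <;> noncomm_ring
  have hrankF : F.rank = (fromBlocks D 0 (fromBlocks 0 0 0 A₄) D).rank := by
    rw [← hG₂, rank_mul_mul_eq L₂ L₂' R₂ R₂' _ hL₂L₂ hR₂R₂,
      rank_mul_mul_eq L L' Rt Rt' _ hL'L hRtRt']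
  have hval : (fromBlocks D 0 (fromBlocks 0 0 0 A₄) D).rank = r + r + A₄.rank := by
    rw [hDdef]
    have := rank_special (α := Fin r) (γ := Fin (n-r)) A₄
    simpa [Fintype.card_fin] using this
  rw [hrankF, hval, isUnit_det_iff_rank_eq_card, Fintype.card_fin]
  have hle : A₄.rank ≤ n - r := by simpa using A₄.rank_le_card_width
  constructor <;> intro h <;> omega
end

section
/- Assume A₄ = E₁⊥⁺AE₂⊥⁺ᵀ is invertible and set Ā = A₁ − A₂A₄⁻¹A₃. Then for every scalar λ, the congruence identity [[I_r, −A₂A₄⁻¹],[0, I_{n−r}]] · L·(A − λE)·R · [[I_r, 0],[−A₄⁻¹A₃, I_{n−r}]] = [[Ā − λI_r, 0],[0, A₄]] holds. -/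
open Matrix

lemma pinv_mul_self {m p : Type*} [Fintype m] [Fintype p] [DecidableEq p]
    (M : Matrix m p ℝ) (hinj : Function.Injective M.mulVec) : pinv M * M = 1 := by
  have h : IsUnit (Mᵀ * M) := by
    rw [← Matrix.mulVec_injective_iff_isUnit]
    change Function.Injective (Mᵀ * M).mulVecLin
    rw [← LinearMap.ker_eq_bot, Matrix.ker_mulVecLin_transpose_mul_self, LinearMap.ker_eq_bot]
    exact hinj
  unfold pinv
  rw [Matrix.mul_assoc]
  exact Matrix.nonsing_inv_mul _ ((Matrix.isUnit_iff_isUnit_det _).mp h)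

lemma pinv_mul_orth {m p q : Type*} [Fintype m] [Fintype p] [Fintype q] [DecidableEq p]
    (M : Matrix m p ℝ) (N : Matrix m q ℝ) (h : Nᵀ * M = 0) : pinv M * N = 0 := by
  have h' : Mᵀ * N = 0 := by
    have := congrArg Matrix.transpose h
    simpa [Matrix.transpose_mul] using this
  unfold pinv
  rw [Matrix.mul_assoc, h', Matrix.mul_zero]

/-- the congruence identity
`[[I, −A₂A₄⁻¹],[0, I]] · L(A − λE)R · [[I, 0],[−A₄⁻¹A₃, I]] = [[Ā − λI, 0],[0, A₄]]`. -/
theorem stmt2 (n r : ℕ) (hr : 0 < r) (hrn : r < n)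
    (E : Matrix (Fin n) (Fin n) ℝ)
    (E₁ E₂ : Matrix (Fin n) (Fin r) ℝ)
    (E₁b E₂b : Matrix (Fin n) (Fin (n - r)) ℝ)
    (hErank : E.rank = r)
    (hskel : E = E₁ * E₂ᵀ)
    (hE₁rank : E₁.rank = r) (hE₂rank : E₂.rank = r)
    (horth₁ : E₁ᵀ * E₁b = 0) (horth₂ : E₂ᵀ * E₂b = 0)
    (hinv₁ : ∃ M : Matrix (Fin r ⊕ Fin (n - r)) (Fin n) ℝ,
      fromCols E₁ E₁b * M = 1 ∧ M * fromCols E₁ E₁b = 1)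
    (hinv₂ : ∃ M : Matrix (Fin r ⊕ Fin (n - r)) (Fin n) ℝ,
      fromCols E₂ E₂b * M = 1 ∧ M * fromCols E₂ E₂b = 1)
    (A : Matrix (Fin n) (Fin n) ℝ)
    (L : Matrix (Fin r ⊕ Fin (n - r)) (Fin n) ℝ)
    (R : Matrix (Fin n) (Fin r ⊕ Fin (n - r)) ℝ)
    (hL : L = fromRows (pinv E₁) (pinv E₁b))
    (hR : R = fromCols (pinv E₂)ᵀ (pinv E₂b)ᵀ)
    (A₁ : Matrix (Fin r) (Fin r) ℝ) (A₂ : Matrix (Fin r) (Fin (n - r)) ℝ)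
    (A₃ : Matrix (Fin (n - r)) (Fin r) ℝ) (A₄ : Matrix (Fin (n - r)) (Fin (n - r)) ℝ)
    (hA₁ : A₁ = pinv E₁ * A * (pinv E₂)ᵀ) (hA₂ : A₂ = pinv E₁ * A * (pinv E₂b)ᵀ)
    (hA₃ : A₃ = pinv E₁b * A * (pinv E₂)ᵀ) (hA₄ : A₄ = pinv E₁b * A * (pinv E₂b)ᵀ)
    (hA₄inv : IsUnit A₄.det)
    (Abar : Matrix (Fin r) (Fin r) ℝ) (hAbar : Abar = A₁ - A₂ * A₄⁻¹ * A₃)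
    (lam : ℝ) :
    fromBlocks (1 : Matrix (Fin r) (Fin r) ℝ) (-(A₂ * A₄⁻¹)) 0 (1 : Matrix (Fin (n - r)) (Fin (n - r)) ℝ) *
        (L * (A - lam • E) * R) *
        fromBlocks (1 : Matrix (Fin r) (Fin r) ℝ) 0 (-(A₄⁻¹ * A₃)) (1 : Matrix (Fin (n - r)) (Fin (n - r)) ℝ) =
      fromBlocks (Abar - lam • (1 : Matrix (Fin r) (Fin r) ℝ)) 0 0 A₄ := by
  obtain ⟨M₁, hM₁l, hM₁r⟩ := hinv₁
  obtain ⟨M₂, hM₂l, hM₂r⟩ := hinv₂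
  -- injectivity of E₁ and E₂ as column maps
  have hinjC₁ : Function.Injective (fromCols E₁ E₁b).mulVec := fun x y hxy => by
    have h := congrArg (M₁.mulVec) hxy
    rwa [Matrix.mulVec_mulVec, Matrix.mulVec_mulVec, hM₁r, Matrix.one_mulVec,
      Matrix.one_mulVec] at h
  have hinjC₂ : Function.Injective (fromCols E₂ E₂b).mulVec := fun x y hxy => by
    have h := congrArg (M₂.mulVec) hxy
    rwa [Matrix.mulVec_mulVec, Matrix.mulVec_mulVec, hM₂r, Matrix.one_mulVec,
      Matrix.one_mulVec] at h
  have hinj₁ : Function.Injective E₁.mulVec := fun x y hxy => by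
    have h2 : (fromCols E₁ E₁b) *ᵥ Sum.elim x 0 = (fromCols E₁ E₁b) *ᵥ Sum.elim y 0 := by
      simp [Matrix.fromCols_mulVec_sumElim, hxy]
    have h3 := hinjC₁ h2
    exact funext fun i => congrFun h3 (Sum.inl i)
  have hinj₂ : Function.Injective E₂.mulVec := fun x y hxy => by
    have h2 : (fromCols E₂ E₂b) *ᵥ Sum.elim x 0 = (fromCols E₂ E₂b) *ᵥ Sum.elim y 0 := by
      simp [Matrix.fromCols_mulVec_sumElim, hxy]
    have h3 := hinjC₂ h2
    exact funext fun i => congrFun h3 (Sum.inl i)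
  have p₁ : pinv E₁ * E₁ = 1 := pinv_mul_self E₁ hinj₁
  have p₂ : pinv E₂ * E₂ = 1 := pinv_mul_self E₂ hinj₂
  have z₁ : pinv E₁b * E₁ = 0 := pinv_mul_orth E₁b E₁ horth₁
  have z₂ : pinv E₂b * E₂ = 0 := pinv_mul_orth E₂b E₂ horth₂
  -- key block computations
  have hLER : L * E * R = fromBlocks 1 0 0 0 := by
    rw [hskel, hL, hR]
    rw [show fromRows (pinv E₁) (pinv E₁b) * (E₁ * E₂ᵀ) = fromRows E₂ᵀ 0 by
      rw [fromRows_mul, ← Matrix.mul_assoc, ← Matrix.mul_assoc, p₁, z₁,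
        Matrix.one_mul, Matrix.zero_mul]]
    rw [fromRows_mul_fromCols]
    rw [show E₂ᵀ * (pinv E₂)ᵀ = 1 by rw [← Matrix.transpose_mul, p₂, Matrix.transpose_one]]
    rw [show E₂ᵀ * (pinv E₂b)ᵀ = 0 by rw [← Matrix.transpose_mul, z₂, Matrix.transpose_zero]]
    simp
  have hLAR : L * A * R = fromBlocks A₁ A₂ A₃ A₄ := by
    rw [hL, hR, fromRows_mul, fromRows_mul_fromCols, hA₁, hA₂, hA₃, hA₄]
  have hmain : L * (A - lam • E) * R = fromBlocks (A₁ - lam • 1) A₂ A₃ A₄ := by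
    have : L * (A - lam • E) * R = L * A * R - lam • (L * E * R) := by
      rw [Matrix.mul_sub, Matrix.sub_mul, Matrix.mul_smul, Matrix.smul_mul]
    rw [this, hLAR, hLER, Matrix.fromBlocks_smul]
    ext (i|i) (j|j) <;> simp
  rw [hmain, Matrix.fromBlocks_multiply, Matrix.fromBlocks_multiply]
  have hi : A₄⁻¹ * A₄ = 1 := Matrix.nonsing_inv_mul _ hA₄inv
  have hi' : A₄ * A₄⁻¹ = 1 := Matrix.mul_nonsing_inv _ hA₄inv
  have hTR : (1 : Matrix (Fin r) (Fin r) ℝ) * A₂ + -(A₂ * A₄⁻¹) * A₄ = 0 := by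
    simp [Matrix.neg_mul, Matrix.mul_assoc, hi]
  rw [hTR, hAbar]
  simp only [Matrix.one_mul, Matrix.mul_one, Matrix.zero_mul, Matrix.mul_zero,
    Matrix.neg_mul, Matrix.mul_neg, zero_add, add_zero, ← Matrix.mul_assoc, hi']
  congr 1 <;> abel
end

section
/- Assume A₄ is invertible. Let w : ℝ → ℝ^s be continuous and let x : ℝ → ℝ^n be differentiable with E·x'(t) = A·x(t) + B·w(t) for all t ≥ 0, and set z(t) = C·x(t) + D·w(t). Define ξ₁(t) = E₂ᵀx(t) and ξ₂(t) = E₂⊥ᵀx(t). Then for all t ≥ 0: ξ₂(t) = −A₄⁻¹(A₃ξ₁(t) + B₂w(t)), ξ₁ is differentiable with ξ₁'(t) = Āξ₁(t) + B̄w(t), and z(t) = C̄ξ₁(t) + D̄w(t), where Ā = A₁ − A₂A₄⁻¹A₃, B̄ = B₁ − A₂A₄⁻¹B₂, C̄ = C₁ − C₂A₄⁻¹A₃, D̄ = D − C₂A₄⁻¹B₂. -/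
open Matrix

lemma leftInv_isUnit_det {m p : Type*} [Fintype m] [Fintype p] [DecidableEq p]
    (M : Matrix m p ℝ) (L : Matrix p m ℝ) (h : L * M = 1) :
    IsUnit (Mᵀ * M).det := by
  rw [isUnit_iff_ne_zero]
  intro hdet
  obtain ⟨v, hv, hv0⟩ := (Matrix.exists_mulVec_eq_zero_iff).2 hdet
  have hMv : M.mulVec v = 0 := by
    have h1 : M.mulVec v ⬝ᵥ M.mulVec v = 0 := by
      have h2 : v ⬝ᵥ (Mᵀ * M).mulVec v = 0 := by rw [hv0, dotProduct_zero]
      rwa [← Matrix.mulVec_mulVec, Matrix.dotProduct_mulVec, Matrix.vecMul_transpose] at h2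
    exact dotProduct_self_eq_zero.mp h1
  apply hv
  have h3 : (L * M).mulVec v = (1 : Matrix p p ℝ).mulVec v := by rw [h]
  rwa [← Matrix.mulVec_mulVec, hMv, Matrix.mulVec_zero, Matrix.one_mulVec, eq_comm] at h3

lemma blocks_leftInv {N R Q : Type*} [Fintype N] [Fintype R] [Fintype Q]
    [DecidableEq R] [DecidableEq Q]
    (A : Matrix N R ℝ) (B : Matrix N Q ℝ) (M : Matrix (R ⊕ Q) N ℝ)
    (h : M * fromCols A B = 1) :
    M.toRows₁ * A = 1 ∧ M.toRows₂ * B = 1 := by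
  rw [← Matrix.fromRows_toRows M, Matrix.fromRows_mul_fromCols, ← Matrix.fromBlocks_one] at h
  rw [Matrix.fromBlocks_inj] at h
  exact ⟨h.1, h.2.2.2⟩

lemma proj_one {N R Q : Type*} [Fintype N] [DecidableEq N] [Fintype R] [Fintype Q]
    [DecidableEq R] [DecidableEq Q]
    (A : Matrix N R ℝ) (B : Matrix N Q ℝ)
    (horth : Aᵀ * B = 0)
    (hA : IsUnit (Aᵀ * A).det) (hB : IsUnit (Bᵀ * B).det)
    (M : Matrix (R ⊕ Q) N ℝ) (hNM : fromCols A B * M = 1) :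
    A * pinv A + B * pinv B = 1 := by
  have horth' : Bᵀ * A = 0 := by
    have := congrArg Matrix.transpose horth
    simpa [Matrix.transpose_mul] using this
  have hpA : pinv A * A = 1 := by
    rw [pinv, Matrix.mul_assoc, Matrix.nonsing_inv_mul _ hA]
  have hpB : pinv B * B = 1 := by
    rw [pinv, Matrix.mul_assoc, Matrix.nonsing_inv_mul _ hB]
  have hpAB : pinv A * B = 0 := by
    rw [pinv, Matrix.mul_assoc, horth, Matrix.mul_zero]
  have hpBA : pinv B * A = 0 := by
    rw [pinv, Matrix.mul_assoc, horth', Matrix.mul_zero]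
  have hPN : (A * pinv A + B * pinv B) * fromCols A B = fromCols A B := by
    simp only [Matrix.mul_fromCols, Matrix.add_mul, Matrix.mul_assoc, hpA, hpB, hpAB, hpBA,
      Matrix.mul_zero, Matrix.mul_one, add_zero, zero_add]
    ext i (j | j) <;> simp [Matrix.fromCols]
  calc A * pinv A + B * pinv B
      = (A * pinv A + B * pinv B) * (fromCols A B * M) := by rw [hNM, Matrix.mul_one]
    _ = ((A * pinv A + B * pinv B) * fromCols A B) * M := by rw [Matrix.mul_assoc]
    _ = fromCols A B * M := by rw [hPN]
    _ = 1 := hNM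
/-- under the equivalence transformation, a solution of the descriptor system
`E·x' = A·x + B·w`, `z = C·x + D·w` yields `ξ₂ = −A₄⁻¹(A₃ξ₁ + B₂w)`,
`ξ₁' = Āξ₁ + B̄w` and `z = C̄ξ₁ + D̄w`. -/
theorem stmt4 (n r s k : ℕ) (hr : 0 < r) (hrn : r < n)
    (E : Matrix (Fin n) (Fin n) ℝ)
    (E₁ E₂ : Matrix (Fin n) (Fin r) ℝ)
    (E₁b E₂b : Matrix (Fin n) (Fin (n - r)) ℝ)
    (hErank : E.rank = r)
    (hskel : E = E₁ * E₂ᵀ)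
    (hE₁rank : E₁.rank = r) (hE₂rank : E₂.rank = r)
    (horth₁ : E₁ᵀ * E₁b = 0) (horth₂ : E₂ᵀ * E₂b = 0)
    (hinv₁ : ∃ M : Matrix (Fin r ⊕ Fin (n - r)) (Fin n) ℝ,
      fromCols E₁ E₁b * M = 1 ∧ M * fromCols E₁ E₁b = 1)
    (hinv₂ : ∃ M : Matrix (Fin r ⊕ Fin (n - r)) (Fin n) ℝ,
      fromCols E₂ E₂b * M = 1 ∧ M * fromCols E₂ E₂b = 1)
    (A : Matrix (Fin n) (Fin n) ℝ) (B : Matrix (Fin n) (Fin s) ℝ)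
    (C : Matrix (Fin k) (Fin n) ℝ) (D : Matrix (Fin k) (Fin s) ℝ)
    (A₁ : Matrix (Fin r) (Fin r) ℝ) (A₂ : Matrix (Fin r) (Fin (n - r)) ℝ)
    (A₃ : Matrix (Fin (n - r)) (Fin r) ℝ) (A₄ : Matrix (Fin (n - r)) (Fin (n - r)) ℝ)
    (B₁ : Matrix (Fin r) (Fin s) ℝ) (B₂ : Matrix (Fin (n - r)) (Fin s) ℝ)
    (C₁ : Matrix (Fin k) (Fin r) ℝ) (C₂ : Matrix (Fin k) (Fin (n - r)) ℝ)
    (hA₁ : A₁ = pinv E₁ * A * (pinv E₂)ᵀ) (hA₂ : A₂ = pinv E₁ * A * (pinv E₂b)ᵀ)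
    (hA₃ : A₃ = pinv E₁b * A * (pinv E₂)ᵀ) (hA₄ : A₄ = pinv E₁b * A * (pinv E₂b)ᵀ)
    (hB₁ : B₁ = pinv E₁ * B) (hB₂ : B₂ = pinv E₁b * B)
    (hC₁ : C₁ = C * (pinv E₂)ᵀ) (hC₂ : C₂ = C * (pinv E₂b)ᵀ)
    (hA₄inv : IsUnit A₄.det)
    (Abar : Matrix (Fin r) (Fin r) ℝ) (hAbar : Abar = A₁ - A₂ * A₄⁻¹ * A₃)
    (Bbar : Matrix (Fin r) (Fin s) ℝ) (hBbar : Bbar = B₁ - A₂ * A₄⁻¹ * B₂)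
    (Cbar : Matrix (Fin k) (Fin r) ℝ) (hCbar : Cbar = C₁ - C₂ * A₄⁻¹ * A₃)
    (Dbar : Matrix (Fin k) (Fin s) ℝ) (hDbar : Dbar = D - C₂ * A₄⁻¹ * B₂)
    (w : ℝ → Fin s → ℝ) (hw : Continuous w)
    (x : ℝ → Fin n → ℝ) (hx : Differentiable ℝ x)
    (hode : ∀ t : ℝ, 0 ≤ t →
      E.mulVec (deriv x t) = A.mulVec (x t) + B.mulVec (w t))
    (z : ℝ → Fin k → ℝ)
    (hz : ∀ t : ℝ, z t = C.mulVec (x t) + D.mulVec (w t))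
    (ξ₁ : ℝ → Fin r → ℝ) (hξ₁ : ξ₁ = fun t => E₂ᵀ.mulVec (x t))
    (ξ₂ : ℝ → Fin (n - r) → ℝ) (hξ₂ : ξ₂ = fun t => E₂bᵀ.mulVec (x t)) :
    ∀ t : ℝ, 0 ≤ t →
      ξ₂ t = -(A₄⁻¹.mulVec (A₃.mulVec (ξ₁ t) + B₂.mulVec (w t))) ∧
      HasDerivAt ξ₁ (Abar.mulVec (ξ₁ t) + Bbar.mulVec (w t)) t ∧
      z t = Cbar.mulVec (ξ₁ t) + Dbar.mulVec (w t) := by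
  obtain ⟨M₁, hM₁N, hM₁N'⟩ := hinv₁
  obtain ⟨M₂, hM₂N, hM₂N'⟩ := hinv₂
  obtain ⟨hL₁, hL₁b⟩ := blocks_leftInv E₁ E₁b M₁ hM₁N'
  obtain ⟨hL₂, hL₂b⟩ := blocks_leftInv E₂ E₂b M₂ hM₂N'
  have hd₁ : IsUnit (E₁ᵀ * E₁).det := leftInv_isUnit_det E₁ _ hL₁
  have hd₁b : IsUnit (E₁bᵀ * E₁b).det := leftInv_isUnit_det E₁b _ hL₁b
  have hd₂ : IsUnit (E₂ᵀ * E₂).det := leftInv_isUnit_det E₂ _ hL₂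
  have hd₂b : IsUnit (E₂bᵀ * E₂b).det := leftInv_isUnit_det E₂b _ hL₂b
  have hp₁ : pinv E₁ * E₁ = 1 := by
    rw [pinv, Matrix.mul_assoc, Matrix.nonsing_inv_mul _ hd₁]
  have horth₁' : E₁bᵀ * E₁ = 0 := by
    have := congrArg Matrix.transpose horth₁
    simpa [Matrix.transpose_mul] using this
  have hp₁b0 : pinv E₁b * E₁ = 0 := by
    rw [pinv, Matrix.mul_assoc, horth₁', Matrix.mul_zero]
  have hproj : E₂ * pinv E₂ + E₂b * pinv E₂b = 1 :=
    proj_one E₂ E₂b horth₂ hd₂ hd₂b M₂ hM₂N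
  have hprojT : (pinv E₂)ᵀ * E₂ᵀ + (pinv E₂b)ᵀ * E₂bᵀ = 1 := by
    have := congrArg Matrix.transpose hproj
    simpa [Matrix.transpose_add, Matrix.transpose_mul] using this
  have hxdec : ∀ t : ℝ, (pinv E₂)ᵀ.mulVec (ξ₁ t) + (pinv E₂b)ᵀ.mulVec (ξ₂ t) = x t := by
    intro t
    calc (pinv E₂)ᵀ.mulVec (ξ₁ t) + (pinv E₂b)ᵀ.mulVec (ξ₂ t)
        = ((pinv E₂)ᵀ * E₂ᵀ + (pinv E₂b)ᵀ * E₂bᵀ).mulVec (x t) := by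
          simp [hξ₁, hξ₂, Matrix.add_mulVec, Matrix.mulVec_mulVec]
      _ = x t := by rw [hprojT, Matrix.one_mulVec]
  have hE₁E : pinv E₁ * E = E₂ᵀ := by
    rw [hskel, ← Matrix.mul_assoc, hp₁, Matrix.one_mul]
  have hE₁bE : pinv E₁b * E = 0 := by
    rw [hskel, ← Matrix.mul_assoc, hp₁b0, Matrix.zero_mul]
  intro t ht
  have hode' := hode t ht
  -- transformed equations
  have hAx : (pinv E₁b).mulVec (A.mulVec (x t) + B.mulVec (w t))
      = A₃.mulVec (ξ₁ t) + A₄.mulVec (ξ₂ t) + B₂.mulVec (w t) := by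
    rw [← hxdec t, hA₃, hA₄, hB₂]
    simp [Matrix.mulVec_add, Matrix.mulVec_mulVec, Matrix.mul_assoc, add_assoc]
  have hsum : A₃.mulVec (ξ₁ t) + A₄.mulVec (ξ₂ t) + B₂.mulVec (w t) = 0 := by
    rw [← hAx, ← hode', Matrix.mulVec_mulVec, hE₁bE, Matrix.zero_mulVec]
  have heq2 : A₄.mulVec (ξ₂ t) = -(A₃.mulVec (ξ₁ t) + B₂.mulVec (w t)) := by
    have h0 : A₄.mulVec (ξ₂ t) + (A₃.mulVec (ξ₁ t) + B₂.mulVec (w t)) = 0 := by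
      rw [← hsum]; abel
    exact eq_neg_of_add_eq_zero_left h0
  have claim1 : ξ₂ t = -(A₄⁻¹.mulVec (A₃.mulVec (ξ₁ t) + B₂.mulVec (w t))) := by
    calc ξ₂ t = (A₄⁻¹ * A₄).mulVec (ξ₂ t) := by
          rw [Matrix.nonsing_inv_mul _ hA₄inv, Matrix.one_mulVec]
      _ = A₄⁻¹.mulVec (A₄.mulVec (ξ₂ t)) := (Matrix.mulVec_mulVec _ _ _).symm
      _ = A₄⁻¹.mulVec (-(A₃.mulVec (ξ₁ t) + B₂.mulVec (w t))) := by rw [heq2]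
      _ = -(A₄⁻¹.mulVec (A₃.mulVec (ξ₁ t) + B₂.mulVec (w t))) := Matrix.mulVec_neg _ _
  refine ⟨claim1, ?_, ?_⟩
  · -- derivative
    have hxt : HasDerivAt x (deriv x t) t := (hx t).hasDerivAt
    have hld : HasDerivAt ξ₁ (E₂ᵀ.mulVec (deriv x t)) t := by
      have := ((Matrix.mulVecLin E₂ᵀ).toContinuousLinearMap.hasFDerivAt
        (x := x t)).comp_hasDerivAt t hxt
      simpa [hξ₁, Function.comp_def, Matrix.mulVec_transpose] using this
    have hval : E₂ᵀ.mulVec (deriv x t) = Abar.mulVec (ξ₁ t) + Bbar.mulVec (w t) := by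
      have step1 : E₂ᵀ.mulVec (deriv x t)
          = (pinv E₁).mulVec (A.mulVec (x t) + B.mulVec (w t)) := by
        rw [← hode', ← hE₁E, ← Matrix.mulVec_mulVec]
      have step2 : (pinv E₁).mulVec (A.mulVec (x t) + B.mulVec (w t))
          = A₁.mulVec (ξ₁ t) + A₂.mulVec (ξ₂ t) + B₁.mulVec (w t) := by
        rw [← hxdec t, hA₁, hA₂, hB₁]
        simp [Matrix.mulVec_add, Matrix.mulVec_mulVec, Matrix.mul_assoc, add_assoc]
      rw [step1, step2, claim1, hAbar, hBbar]
      simp only [Matrix.sub_mulVec, Matrix.mulVec_add, Matrix.mulVec_neg,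
        ← Matrix.mulVec_mulVec]
      abel
    exact hval ▸ hld
  · -- output equation
    have step2 : C.mulVec (x t) = C₁.mulVec (ξ₁ t) + C₂.mulVec (ξ₂ t) := by
      rw [← hxdec t, hC₁, hC₂]
      simp [Matrix.mulVec_add, Matrix.mulVec_mulVec]
    rw [hz t, step2, claim1, hCbar, hDbar]
    simp only [Matrix.sub_mulVec, Matrix.mulVec_add, Matrix.mulVec_neg,
      ← Matrix.mulVec_mulVec]
    abel
end

section
/- Let X ∈ ℝ^{r×r} be symmetric. The block matrix Ω̄(X) = [[ĀᵀX + XĀ, XB̄, C̄ᵀ],[B̄ᵀX, −γ²P, D̄ᵀ],[C̄, D̄, −Q⁻¹]] is negative definite if and only if R̄₁ := γ²P − D̄ᵀQD̄ is positive definite and Ā₀ᵀX + XĀ₀ + XR̄₀X + Q̄₀ is negative definite, where Ā₀ = Ā + B̄R̄₁⁻¹D̄ᵀQC̄, R̄₀ = B̄R̄₁⁻¹B̄ᵀ, Q̄₀ = C̄ᵀ(Q + QD̄R̄₁⁻¹D̄ᵀQ)C̄. -/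
open Matrix

section Helpers

variable {m n : Type*} [Fintype m] [Fintype n] [DecidableEq m] [DecidableEq n]

lemma posDef_iff_posSemidef_det_ne_zero' {M : Matrix n n ℝ} :
    M.PosDef ↔ M.PosSemidef ∧ M.det ≠ 0 := by
  constructor
  · exact fun h => ⟨h.posSemidef, h.det_pos.ne'⟩
  · rintro ⟨hs, hd⟩
    refine PosDef.of_dotProduct_mulVec_pos hs.1 fun x hx => ?_
    rcases lt_or_eq_of_le (hs.dotProduct_mulVec_nonneg x) with h | h
    · exact h
    · exfalso
      have h0 : M *ᵥ x = 0 := (hs.dotProduct_mulVec_zero_iff x).mp h.symm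
      have hx0 : x = 0 := by
        have h1 : M⁻¹ * M = 1 := nonsing_inv_mul M (isUnit_iff_ne_zero.mpr hd)
        calc x = (M⁻¹ * M) *ᵥ x := by rw [h1, one_mulVec]
        _ = M⁻¹ *ᵥ (M *ᵥ x) := by rw [← mulVec_mulVec]
        _ = 0 := by rw [h0, mulVec_zero]
      exact hx hx0

lemma posDef_fromBlocks₂₂' (A : Matrix m m ℝ) (B : Matrix m n ℝ) {D : Matrix n n ℝ}
    (hD : D.PosDef) :
    (fromBlocks A B Bᴴ D).PosDef ↔ (A - B * D⁻¹ * Bᴴ).PosDef := by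
  haveI := hD.isUnit.invertible
  rw [posDef_iff_posSemidef_det_ne_zero', posDef_iff_posSemidef_det_ne_zero',
    PosDef.fromBlocks₂₂ A B hD, det_fromBlocks₂₂,
    invOf_eq_nonsing_inv]
  constructor
  · rintro ⟨h1, h2⟩
    exact ⟨h1, fun h => h2 (by rw [h, mul_zero])⟩
  · rintro ⟨h1, h2⟩
    exact ⟨h1, mul_ne_zero hD.det_pos.ne' h2⟩

lemma posDef_fromBlocks_bottom' {A : Matrix m m ℝ} {B : Matrix m n ℝ} {C : Matrix n m ℝ}
    {D : Matrix n n ℝ} (h : (fromBlocks A B C D).PosDef) : D.PosDef := by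
  have hD : D.IsHermitian := by
    have h1 := h.1
    rw [isHermitian_fromBlocks_iff] at h1
    exact h1.2.2.2
  refine PosDef.of_dotProduct_mulVec_pos hD fun y hy => ?_
  have hne : (Sum.elim (0 : m → ℝ) y) ≠ 0 := by
    intro hcon
    apply hy
    funext i
    exact congrFun hcon (Sum.inr i)
  have h2 := h.dotProduct_mulVec_pos hne
  simpa [fromBlocks_mulVec, dotProduct, Fintype.sum_sum_type] using h2

lemma real_conjTranspose_eq_transpose {a b : Type*} (M : Matrix a b ℝ) : Mᴴ = Mᵀ := by
  ext i j
  simp [conjTranspose_apply]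

end Helpers

/-- Schur complement form of the bounded-real LMI:
`Ω̄(X) < 0` iff `R̄₁ := γ²P − D̄ᵀQD̄ > 0` and `Ā₀ᵀX + XĀ₀ + XR̄₀X + Q̄₀ < 0`. -/
theorem stmt5 (r s k : ℕ)
    (Abar : Matrix (Fin r) (Fin r) ℝ) (Bbar : Matrix (Fin r) (Fin s) ℝ)
    (Cbar : Matrix (Fin k) (Fin r) ℝ) (Dbar : Matrix (Fin k) (Fin s) ℝ)
    (P : Matrix (Fin s) (Fin s) ℝ) (Q : Matrix (Fin k) (Fin k) ℝ)
    (hP : P.PosDef) (hQ : Q.PosDef)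
    (γ : ℝ) (hγ : 0 < γ)
    (X : Matrix (Fin r) (Fin r) ℝ) (hX : X.IsSymm)
    (R₁ : Matrix (Fin s) (Fin s) ℝ) (hR₁ : R₁ = γ ^ 2 • P - Dbarᵀ * Q * Dbar)
    (A₀ : Matrix (Fin r) (Fin r) ℝ) (hA₀ : A₀ = Abar + Bbar * R₁⁻¹ * Dbarᵀ * Q * Cbar)
    (R₀ : Matrix (Fin r) (Fin r) ℝ) (hR₀ : R₀ = Bbar * R₁⁻¹ * Bbarᵀ)
    (Q₀ : Matrix (Fin r) (Fin r) ℝ)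
    (hQ₀ : Q₀ = Cbarᵀ * (Q + Q * Dbar * R₁⁻¹ * Dbarᵀ * Q) * Cbar) :
    (-(fromBlocks
        (fromBlocks (Abarᵀ * X + X * Abar) (X * Bbar) (Bbarᵀ * X) (-(γ ^ 2 • P)))
        (fromRows Cbarᵀ Dbarᵀ)
        (fromCols Cbar Dbar)
        (-Q⁻¹))).PosDef ↔
      R₁.PosDef ∧ (-(A₀ᵀ * X + X * A₀ + X * R₀ * X + Q₀)).PosDef := by
  classical
  -- symmetry facts
  have hQs : Qᵀ = Q := by
    rw [← real_conjTranspose_eq_transpose]; exact hQ.isHermitian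
  have hPs : Pᵀ = P := by
    rw [← real_conjTranspose_eq_transpose]; exact hP.isHermitian
  have hXs : Xᵀ = X := hX
  have hR₁s : R₁ᵀ = R₁ := by
    rw [hR₁]
    simp only [transpose_sub, transpose_smul, hPs, transpose_mul, transpose_transpose, hQs,
      Matrix.mul_assoc]
  have hR₁invs : (R₁⁻¹)ᵀ = R₁⁻¹ := by
    rw [transpose_nonsing_inv, hR₁s]
  -- abbreviations for the middle Schur complement
  set A₁ : Matrix (Fin r ⊕ Fin s) (Fin r ⊕ Fin s) ℝ :=
    fromBlocks (-(Abarᵀ * X + X * Abar)) (-(X * Bbar)) (-(Bbarᵀ * X)) (γ ^ 2 • P) with hA₁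
  set B₁ : Matrix (Fin r ⊕ Fin s) (Fin k) ℝ := -(fromRows Cbarᵀ Dbarᵀ) with hB₁
  have hB₁H : B₁ᴴ = -(fromCols Cbar Dbar) := by
    rw [real_conjTranspose_eq_transpose, hB₁, transpose_neg, transpose_fromRows,
      transpose_transpose, transpose_transpose]
  have hMeq : -(fromBlocks
        (fromBlocks (Abarᵀ * X + X * Abar) (X * Bbar) (Bbarᵀ * X) (-(γ ^ 2 • P)))
        (fromRows Cbarᵀ Dbarᵀ)
        (fromCols Cbar Dbar)
        (-Q⁻¹)) = fromBlocks A₁ B₁ B₁ᴴ Q⁻¹ := by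
    rw [fromBlocks_neg, fromBlocks_neg, hB₁H, hA₁, hB₁]; simp only [neg_neg]
  rw [hMeq, posDef_fromBlocks₂₂' A₁ B₁ hQ.inv]
  have hQinv : (Q⁻¹)⁻¹ = Q := nonsing_inv_nonsing_inv Q hQ.det_pos.ne'.isUnit
  have hS12H : (-(X * Bbar) - Cbarᵀ * Q * Dbar)ᴴ = -(Bbarᵀ * X) - Dbarᵀ * Q * Cbar := by
    rw [real_conjTranspose_eq_transpose]
    simp [transpose_sub, transpose_neg, transpose_mul, hXs, hQs, Matrix.mul_assoc]
  have key : A₁ - B₁ * (Q⁻¹)⁻¹ * B₁ᴴ =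
      fromBlocks (-(Abarᵀ * X + X * Abar) - Cbarᵀ * Q * Cbar)
        (-(X * Bbar) - Cbarᵀ * Q * Dbar)
        (-(X * Bbar) - Cbarᵀ * Q * Dbar)ᴴ R₁ := by
    rw [hQinv, hB₁H, hS12H, hB₁, hA₁, hR₁]
    simp only [Matrix.neg_mul, Matrix.mul_neg, neg_neg, fromRows_mul, mul_fromCols, fromRows_fromCols_eq_fromBlocks, fromCols_fromRows_eq_fromBlocks,
      sub_eq_add_neg, fromBlocks_neg, fromBlocks_add]
  rw [key]
  have halg : (-(Abarᵀ * X + X * Abar) - Cbarᵀ * Q * Cbar) -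
      (-(X * Bbar) - Cbarᵀ * Q * Dbar) * R₁⁻¹ * (-(X * Bbar) - Cbarᵀ * Q * Dbar)ᴴ =
      -(A₀ᵀ * X + X * A₀ + X * R₀ * X + Q₀) := by
    rw [real_conjTranspose_eq_transpose, hA₀, hR₀, hQ₀]
    simp only [transpose_add, transpose_mul, transpose_neg, transpose_sub, transpose_transpose,
      hXs, hQs, hR₁invs]
    simp only [Matrix.mul_add, Matrix.add_mul, Matrix.mul_sub, Matrix.sub_mul, Matrix.neg_mul,
      Matrix.mul_neg, neg_neg, neg_add, Matrix.mul_assoc]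
    abel
  constructor
  · intro h
    have hRpd : R₁.PosDef := posDef_fromBlocks_bottom' h
    refine ⟨hRpd, ?_⟩
    have h2 := (posDef_fromBlocks₂₂' _ _ hRpd).mp h
    rwa [halg] at h2
  · rintro ⟨hRpd, h⟩
    refine (posDef_fromBlocks₂₂' _ _ hRpd).mpr ?_
    rwa [halg]
end

section
/- Let X ∈ ℝ^{r×r} be symmetric with Ω̄(X) = [[ĀᵀX + XĀ, XB̄, C̄ᵀ],[B̄ᵀX, −γ²P, D̄ᵀ],[C̄, D̄, −Q⁻¹]] negative semidefinite. Let w : [0,∞) → ℝ^s be continuous, let ξ : [0,∞) → ℝ^r be differentiable with ξ'(t) = Āξ(t) + B̄w(t) for all t ≥ 0, and set z(t) = C̄ξ(t) + D̄w(t). Then for every T ≥ 0: ξ(T)ᵀXξ(T) + ∫₀^T (z(t)ᵀQz(t) − γ²w(t)ᵀPw(t)) dt ≤ ξ(0)ᵀXξ(0). -/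
open Matrix intervalIntegral

/-- Key algebraic (pointwise) dissipation inequality obtained from `Ω̄(X) ≤ 0`. -/
lemma stmt8_key (r s k : ℕ)
    (Abar : Matrix (Fin r) (Fin r) ℝ) (Bbar : Matrix (Fin r) (Fin s) ℝ)
    (Cbar : Matrix (Fin k) (Fin r) ℝ) (Dbar : Matrix (Fin k) (Fin s) ℝ)
    (P : Matrix (Fin s) (Fin s) ℝ) (Q : Matrix (Fin k) (Fin k) ℝ)
    (hQ : Q.PosDef) (γ : ℝ)
    (X : Matrix (Fin r) (Fin r) ℝ)
    (hΩ : (-(fromBlocks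
        (fromBlocks (Abarᵀ * X + X * Abar) (X * Bbar) (Bbarᵀ * X) (-(γ ^ 2 • P)))
        (fromRows Cbarᵀ Dbarᵀ)
        (fromCols Cbar Dbar)
        (-Q⁻¹))).PosSemidef)
    (ξv : Fin r → ℝ) (wv : Fin s → ℝ) (zv : Fin k → ℝ)
    (hzv : zv = Cbar.mulVec ξv + Dbar.mulVec wv) :
    (Abar.mulVec ξv + Bbar.mulVec wv) ⬝ᵥ X.mulVec ξv
      + ξv ⬝ᵥ X.mulVec (Abar.mulVec ξv + Bbar.mulVec wv)
      + (zv ⬝ᵥ Q.mulVec zv - γ ^ 2 * (wv ⬝ᵥ P.mulVec wv)) ≤ 0 := by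
  have hT : ∀ {m n : ℕ} (M : Matrix (Fin m) (Fin n) ℝ) (a : Fin n → ℝ) (b : Fin m → ℝ),
      a ⬝ᵥ Mᵀ *ᵥ b = M *ᵥ a ⬝ᵥ b := by
    intros; rw [Matrix.dotProduct_mulVec, Matrix.vecMul_transpose]
  have hQinv : Q⁻¹ *ᵥ (Q *ᵥ zv) = zv := by
    rw [Matrix.mulVec_mulVec, Matrix.nonsing_inv_mul Q (isUnit_iff_ne_zero.mpr hQ.det_pos.ne'),
      Matrix.one_mulVec]
  have h0 := hΩ.dotProduct_mulVec_nonneg (Sum.elim (Sum.elim ξv wv) (Q.mulVec zv))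
  simp only [Sum.elim_comp_inl, Sum.elim_comp_inr, star_trivial, Matrix.neg_mulVec,
    dotProduct_neg,
    Matrix.fromBlocks_mulVec, Matrix.fromRows_mulVec, Matrix.fromCols_mulVec_sumElim,
    Sum.elim_add_add, sumElim_dotProduct_sumElim,
    Matrix.add_mulVec, Matrix.smul_mulVec,
    dotProduct_add, dotProduct_smul, smul_eq_mul,
    ← Matrix.mulVec_mulVec, hT, hQinv, dotProduct_neg, Matrix.neg_mulVec] at h0
  have c1 : (Abar *ᵥ ξv + Bbar *ᵥ wv) ⬝ᵥ X *ᵥ ξv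
      = Abar *ᵥ ξv ⬝ᵥ X *ᵥ ξv + Bbar *ᵥ wv ⬝ᵥ X *ᵥ ξv := add_dotProduct _ _ _
  have c2 : ξv ⬝ᵥ X *ᵥ (Abar *ᵥ ξv + Bbar *ᵥ wv)
      = ξv ⬝ᵥ X *ᵥ Abar *ᵥ ξv + ξv ⬝ᵥ X *ᵥ Bbar *ᵥ wv := by
    rw [Matrix.mulVec_add, dotProduct_add]
  have c3 : Q *ᵥ zv ⬝ᵥ Cbar *ᵥ ξv + Q *ᵥ zv ⬝ᵥ Dbar *ᵥ wv = zv ⬝ᵥ Q *ᵥ zv := by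
    rw [← dotProduct_add, ← hzv, dotProduct_comm]
  have c4 : Cbar *ᵥ ξv ⬝ᵥ Q *ᵥ zv + Dbar *ᵥ wv ⬝ᵥ Q *ᵥ zv = zv ⬝ᵥ Q *ᵥ zv := by
    rw [← add_dotProduct, ← hzv]
  have c5 : Q *ᵥ zv ⬝ᵥ zv = zv ⬝ᵥ Q *ᵥ zv := dotProduct_comm _ _
  linarith

/-- dissipation inequality: if `Ω̄(X) ≤ 0` then along any trajectory of
`ξ' = Āξ + B̄w`, `z = C̄ξ + D̄w` one has
`ξ(T)ᵀXξ(T) + ∫₀^T (zᵀQz − γ²wᵀPw) dt ≤ ξ(0)ᵀXξ(0)` for all `T ≥ 0`. -/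
theorem stmt8 (r s k : ℕ)
    (Abar : Matrix (Fin r) (Fin r) ℝ) (Bbar : Matrix (Fin r) (Fin s) ℝ)
    (Cbar : Matrix (Fin k) (Fin r) ℝ) (Dbar : Matrix (Fin k) (Fin s) ℝ)
    (P : Matrix (Fin s) (Fin s) ℝ) (Q : Matrix (Fin k) (Fin k) ℝ)
    (hP : P.PosDef) (hQ : Q.PosDef)
    (γ : ℝ) (hγ : 0 < γ)
    (X : Matrix (Fin r) (Fin r) ℝ) (hX : X.IsSymm)
    (hΩ : (-(fromBlocks
        (fromBlocks (Abarᵀ * X + X * Abar) (X * Bbar) (Bbarᵀ * X) (-(γ ^ 2 • P)))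
        (fromRows Cbarᵀ Dbarᵀ)
        (fromCols Cbar Dbar)
        (-Q⁻¹))).PosSemidef)
    (w : ℝ → Fin s → ℝ) (hw : Continuous w)
    (ξ : ℝ → Fin r → ℝ)
    (hξ : ∀ t : ℝ, 0 ≤ t → HasDerivAt ξ (Abar.mulVec (ξ t) + Bbar.mulVec (w t)) t)
    (z : ℝ → Fin k → ℝ)
    (hz : ∀ t : ℝ, z t = Cbar.mulVec (ξ t) + Dbar.mulVec (w t)) :
    ∀ T : ℝ, 0 ≤ T →
      ξ T ⬝ᵥ X.mulVec (ξ T) +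
          (∫ t in (0 : ℝ)..T, (z t ⬝ᵥ Q.mulVec (z t) - γ ^ 2 * (w t ⬝ᵥ P.mulVec (w t)))) ≤
        ξ 0 ⬝ᵥ X.mulVec (ξ 0) := by
  intro T hT
  set d : ℝ → Fin r → ℝ := fun t => Abar.mulVec (ξ t) + Bbar.mulVec (w t) with hd
  set g : ℝ → ℝ := fun t => z t ⬝ᵥ Q.mulVec (z t) - γ ^ 2 * (w t ⬝ᵥ P.mulVec (w t)) with hgdef
  set V : ℝ → ℝ := fun t => ξ t ⬝ᵥ X.mulVec (ξ t) with hVdef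
  set F : ℝ → ℝ := fun t => V t + ∫ u in (0:ℝ)..t, g u with hFdef
  -- continuity facts
  have hξc : ∀ t : ℝ, 0 ≤ t → ContinuousAt ξ t := fun t ht => (hξ t ht).continuousAt
  have hmulVecCont : ∀ {m n : ℕ} (M : Matrix (Fin m) (Fin n) ℝ),
      Continuous (fun v : Fin n → ℝ => M.mulVec v) := by
    intro m n M
    refine continuous_pi fun i => ?_
    simp only [Matrix.mulVec, dotProduct]
    exact continuous_finset_sum _ fun j _ => continuous_const.mul (continuous_apply j)
  have hquad : ∀ {n : ℕ} (M : Matrix (Fin n) (Fin n) ℝ),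
      Continuous (fun v : Fin n → ℝ => v ⬝ᵥ M.mulVec v) := by
    intro n M
    simp only [Matrix.mulVec, dotProduct]
    exact continuous_finset_sum _ fun i _ =>
      (continuous_apply i).mul (continuous_finset_sum _ fun j _ =>
        continuous_const.mul (continuous_apply j))
  have hzc : ∀ t : ℝ, 0 ≤ t → ContinuousAt z t := by
    intro t ht
    have hzeq : z = fun t => Cbar.mulVec (ξ t) + Dbar.mulVec (w t) := funext hz
    rw [hzeq]
    exact (((hmulVecCont Cbar).continuousAt).comp (hξc t ht)).add
      (((hmulVecCont Dbar).continuousAt).comp hw.continuousAt)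
  have hgc : ∀ t : ℝ, 0 ≤ t → ContinuousAt g t := by
    intro t ht
    exact (((hquad Q).continuousAt).comp (hzc t ht)).sub
      (continuousAt_const.mul (((hquad P).continuousAt).comp hw.continuousAt))
  have hgcOn : ContinuousOn g (Set.Icc 0 T) := fun u hu => (hgc u hu.1).continuousWithinAt
  -- derivative of V at t ≥ 0
  have hVderiv : ∀ t : ℝ, 0 ≤ t →
      HasDerivAt V (d t ⬝ᵥ X.mulVec (ξ t) + ξ t ⬝ᵥ X.mulVec (d t)) t := by
    intro t ht
    have hcomp : ∀ i, HasDerivAt (fun u => ξ u i) (d t i) t := by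
      intro i
      have h1 := (hξ t ht).hasFDerivAt
      have h2 := ((ContinuousLinearMap.proj i :
        (Fin r → ℝ) →L[ℝ] ℝ).hasFDerivAt.comp t h1).hasDerivAt
      simpa [hd, Function.comp_def] using h2
    have hsum : HasDerivAt (fun u => ∑ i, ξ u i * ∑ j, X i j * ξ u j)
        (∑ i, (d t i * ∑ j, X i j * ξ t j + ξ t i * ∑ j, X i j * d t j)) t := by
      apply HasDerivAt.fun_sum
      intro i _
      exact (hcomp i).mul (HasDerivAt.fun_sum fun j _ => (hcomp j).const_mul (X i j))
    have heq : V = fun u => ∑ i, ξ u i * ∑ j, X i j * ξ u j := by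
      funext u
      simp [hVdef, Matrix.mulVec, dotProduct]
    rw [heq]
    convert hsum using 1
    simp [Matrix.mulVec, dotProduct, Finset.sum_add_distrib]
  -- F is continuous on [0, T]
  have hVcOn : ContinuousOn V (Set.Icc 0 T) := fun u hu =>
    (((hquad X).continuousAt).comp (hξc u hu.1)).continuousWithinAt
  have hgIntOn : MeasureTheory.IntegrableOn g (Set.uIcc 0 T) MeasureTheory.volume := by
    rw [Set.uIcc_of_le hT]
    exact hgcOn.integrableOn_Icc
  have hprim : ContinuousOn (fun t => ∫ u in (0:ℝ)..t, g u) (Set.Icc 0 T) := by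
    have := intervalIntegral.continuousOn_primitive_interval hgIntOn
    rwa [Set.uIcc_of_le hT] at this
  have hFcOn : ContinuousOn F (Set.Icc 0 T) := hVcOn.add hprim
  -- F has nonpositive derivative on the interior
  have hFderiv : ∀ t ∈ Set.Ioo (0:ℝ) T,
      HasDerivAt F (d t ⬝ᵥ X.mulVec (ξ t) + ξ t ⬝ᵥ X.mulVec (d t) + g t) t := by
    intro t htI
    have ht : (0:ℝ) ≤ t := le_of_lt htI.1
    have hint : IntervalIntegrable g MeasureTheory.volume 0 t := by
      apply ContinuousOn.intervalIntegrable
      intro u hu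
      rw [Set.uIcc_of_le ht] at hu
      exact (hgc u hu.1).continuousWithinAt
    have hmeas : StronglyMeasurableAtFilter g (nhds t) MeasureTheory.volume :=
      ContinuousAt.stronglyMeasurableAtFilter isOpen_Ioi
        (fun u hu => hgc u (le_of_lt hu)) t htI.1
    have hI : HasDerivAt (fun u => ∫ x in (0:ℝ)..u, g x) (g t) t :=
      intervalIntegral.integral_hasDerivAt_right hint hmeas (hgc t ht)
    exact (hVderiv t ht).add hI
  have hderivle : ∀ t ∈ Set.Ioo (0:ℝ) T, deriv F t ≤ 0 := by
    intro t htI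
    rw [(hFderiv t htI).deriv]
    have := stmt8_key r s k Abar Bbar Cbar Dbar P Q hQ γ X hΩ (ξ t) (w t) (z t) (hz t)
    simpa [hd, hgdef] using this
  have hanti : AntitoneOn F (Set.Icc 0 T) := by
    apply antitoneOn_of_deriv_nonpos (convex_Icc 0 T) hFcOn
    · intro t htI
      rw [interior_Icc] at htI
      exact (hFderiv t htI).differentiableAt.differentiableWithinAt
    · intro t htI
      rw [interior_Icc] at htI
      exact hderivle t htI
  have hFT : F T ≤ F 0 :=
    hanti (Set.left_mem_Icc.mpr hT) (Set.right_mem_Icc.mpr hT) hT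
  have hF0 : F 0 = V 0 := by simp [hFdef]
  calc ξ T ⬝ᵥ X.mulVec (ξ T) + (∫ t in (0:ℝ)..T, g t) = F T := rfl
    _ ≤ F 0 := hFT
    _ = ξ 0 ⬝ᵥ X.mulVec (ξ 0) := hF0
end

section
/- Let X ∈ ℝ^{r×r} be symmetric with Ω̄(X) = [[ĀᵀX + XĀ, XB̄, C̄ᵀ],[B̄ᵀX, −γ²P, D̄ᵀ],[C̄, D̄, −Q⁻¹]] negative semidefinite, and let H̄ ∈ ℝ^{r×r} be symmetric, with 0 ≤ X and X ≤ γ²H̄ in the positive-semidefinite order. Let w : [0,∞) → ℝ^s be continuous, let ξ : [0,∞) → ℝ^r be differentiable with ξ'(t) = Āξ(t) + B̄w(t) for all t ≥ 0, and set z(t) = C̄ξ(t) + D̄w(t). Then for every T ≥ 0: ∫₀^T z(t)ᵀQz(t) dt ≤ γ²(∫₀^T w(t)ᵀPw(t) dt + ξ(0)ᵀH̄ξ(0)). -/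
open Matrix intervalIntegral

/-- if `Ω̄(X) ≤ 0`, `0 ≤ X` and `X ≤ γ²H̄`, then along any trajectory of
`ξ' = Āξ + B̄w`, `z = C̄ξ + D̄w` one has
`∫₀^T zᵀQz dt ≤ γ²(∫₀^T wᵀPw dt + ξ(0)ᵀH̄ξ(0))` for all `T ≥ 0`. -/
theorem stmt9 (r s k : ℕ)
    (Abar : Matrix (Fin r) (Fin r) ℝ) (Bbar : Matrix (Fin r) (Fin s) ℝ)
    (Cbar : Matrix (Fin k) (Fin r) ℝ) (Dbar : Matrix (Fin k) (Fin s) ℝ)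
    (P : Matrix (Fin s) (Fin s) ℝ) (Q : Matrix (Fin k) (Fin k) ℝ)
    (hP : P.PosDef) (hQ : Q.PosDef)
    (γ : ℝ) (hγ : 0 < γ)
    (X : Matrix (Fin r) (Fin r) ℝ) (hX : X.IsSymm)
    (Hbar : Matrix (Fin r) (Fin r) ℝ) (hHbar : Hbar.IsSymm)
    (hΩ : (-(fromBlocks
        (fromBlocks (Abarᵀ * X + X * Abar) (X * Bbar) (Bbarᵀ * X) (-(γ ^ 2 • P)))
        (fromRows Cbarᵀ Dbarᵀ)
        (fromCols Cbar Dbar)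
        (-Q⁻¹))).PosSemidef)
    (hXpos : X.PosSemidef)
    (hXH : (γ ^ 2 • Hbar - X).PosSemidef)
    (w : ℝ → Fin s → ℝ) (hw : Continuous w)
    (ξ : ℝ → Fin r → ℝ)
    (hξ : ∀ t : ℝ, 0 ≤ t → HasDerivAt ξ (Abar.mulVec (ξ t) + Bbar.mulVec (w t)) t)
    (z : ℝ → Fin k → ℝ)
    (hz : ∀ t : ℝ, z t = Cbar.mulVec (ξ t) + Dbar.mulVec (w t)) :
    ∀ T : ℝ, 0 ≤ T →
      (∫ t in (0 : ℝ)..T, z t ⬝ᵥ Q.mulVec (z t)) ≤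
        γ ^ 2 * ((∫ t in (0 : ℝ)..T, w t ⬝ᵥ P.mulVec (w t)) + ξ 0 ⬝ᵥ Hbar.mulVec (ξ 0)) := by
  -- the key pointwise quadratic inequality coming from the LMI
  have key : ∀ (x : Fin r → ℝ) (u : Fin s → ℝ),
      (Abar *ᵥ x + Bbar *ᵥ u) ⬝ᵥ X *ᵥ x + x ⬝ᵥ X *ᵥ (Abar *ᵥ x + Bbar *ᵥ u)
        + (Cbar *ᵥ x + Dbar *ᵥ u) ⬝ᵥ Q *ᵥ (Cbar *ᵥ x + Dbar *ᵥ u)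
      ≤ γ ^ 2 * (u ⬝ᵥ P *ᵥ u) := by
    intro x u
    have hQinv : Q⁻¹ * Q = 1 := Matrix.nonsing_inv_mul Q (isUnit_iff_ne_zero.mpr hQ.det_pos.ne')
    have hQsymm : Qᵀ = Q := (by simpa using hQ.1 : Q.IsSymm)
    have hQv : ∀ p : Fin k → ℝ, Q *ᵥ p = p ᵥ* Q := by
      intro p
      conv_lhs => rw [← hQsymm]
      exact mulVec_transpose Q p
    have hsym : ∀ p q2 : Fin k → ℝ, (Q *ᵥ p) ⬝ᵥ q2 = p ⬝ᵥ (Q *ᵥ q2) := by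
      intro p q2; rw [hQv, ← dotProduct_mulVec]
    have hsimp : ∀ v : Fin k → ℝ, Q⁻¹ *ᵥ (Q *ᵥ v) = v := by
      intro v; rw [mulVec_mulVec, hQinv, one_mulVec]
    have htr : ∀ (n : ℕ) (M : Matrix (Fin n) (Fin r) ℝ) (v : Fin n → ℝ),
        x ⬝ᵥ Mᵀ *ᵥ v = (M *ᵥ x) ⬝ᵥ v := by
      intro n M v; rw [dotProduct_mulVec, vecMul_transpose]
    have htru : ∀ (n : ℕ) (M : Matrix (Fin n) (Fin s) ℝ) (v : Fin n → ℝ),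
        u ⬝ᵥ Mᵀ *ᵥ v = (M *ᵥ u) ⬝ᵥ v := by
      intro n M v; rw [dotProduct_mulVec, vecMul_transpose]
    have h0 := hΩ.dotProduct_mulVec_nonneg (Sum.elim (Sum.elim x u) (Q *ᵥ (Cbar *ᵥ x + Dbar *ᵥ u)))
    rw [neg_mulVec, dotProduct_neg, le_neg, neg_zero] at h0
    simp only [star_trivial, fromBlocks_mulVec, Sum.elim_comp_inl, Sum.elim_comp_inr,
      fromRows_mulVec, fromCols_mulVec_sumElim, sumElim_dotProduct_sumElim,
      dotProduct_add, add_dotProduct, add_mulVec, neg_mulVec, dotProduct_neg,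
      smul_mulVec, dotProduct_smul, smul_eq_mul, ← mulVec_mulVec, mulVec_add,
      hsimp, hsym, htr, htru] at h0
    simp only [dotProduct_add, add_dotProduct, mulVec_add, hsym]
    have hc : (Dbar *ᵥ u) ⬝ᵥ Q *ᵥ (Cbar *ᵥ x) = (Cbar *ᵥ x) ⬝ᵥ Q *ᵥ (Dbar *ᵥ u) := by
      rw [← hsym, dotProduct_comm]
    linarith [h0, hc]
  -- derivative of the storage function
  have hV : ∀ t : ℝ, 0 ≤ t →
      HasDerivAt (fun τ => ξ τ ⬝ᵥ X *ᵥ ξ τ)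
        ((Abar *ᵥ ξ t + Bbar *ᵥ w t) ⬝ᵥ X *ᵥ ξ t
          + ξ t ⬝ᵥ X *ᵥ (Abar *ᵥ ξ t + Bbar *ᵥ w t)) t := by
    intro t ht
    have hd := hξ t ht
    set d : Fin r → ℝ := Abar *ᵥ ξ t + Bbar *ᵥ w t with hddef
    have hdi : ∀ i, HasDerivAt (fun τ => ξ τ i) (d i) t := fun i => hasDerivAt_pi.1 hd i
    have hsum : HasDerivAt (fun τ => ∑ i, ∑ j, ξ τ i * (X i j * ξ τ j))
        (∑ i, ∑ j, (d i * (X i j * ξ t j) + ξ t i * (X i j * d j))) t := by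
      refine HasDerivAt.fun_sum fun i _ => HasDerivAt.fun_sum fun j _ => ?_
      exact (hdi i).mul ((hdi j).const_mul (X i j))
    have hfun : (fun τ => ξ τ ⬝ᵥ X *ᵥ ξ τ) = fun τ => ∑ i, ∑ j, ξ τ i * (X i j * ξ τ j) := by
      funext τ; simp [dotProduct, mulVec, Finset.mul_sum]
    rw [hfun]
    convert hsum using 1
    simp [dotProduct, mulVec, Finset.mul_sum, Finset.sum_add_distrib]
  intro T hT
  have hIcc : Set.uIcc (0 : ℝ) T = Set.Icc 0 T := Set.uIcc_of_le hT
  -- continuity helpers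
  have hdotCont : ∀ (n m : ℕ) (M : Matrix (Fin n) (Fin m) ℝ)
      (a : ℝ → Fin n → ℝ) (b : ℝ → Fin m → ℝ),
      ContinuousOn a (Set.Icc 0 T) → ContinuousOn b (Set.Icc 0 T) →
      ContinuousOn (fun t => a t ⬝ᵥ M *ᵥ b t) (Set.Icc 0 T) := by
    intro n m M a b ha hb
    simp only [dotProduct, mulVec]
    refine continuousOn_finset_sum _ fun i _ => ContinuousOn.mul
      ((continuous_apply i).comp_continuousOn ha)
      (continuousOn_finset_sum _ fun j _ => continuousOn_const.mul
        ((continuous_apply j).comp_continuousOn hb))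
  have hvecCont : ∀ (n m : ℕ) (M : Matrix (Fin n) (Fin m) ℝ) (b : ℝ → Fin m → ℝ),
      ContinuousOn b (Set.Icc 0 T) → ContinuousOn (fun t => M *ᵥ b t) (Set.Icc 0 T) := by
    intro n m M b hb
    rw [continuousOn_pi]
    intro i
    simp only [mulVec, dotProduct]
    exact continuousOn_finset_sum _ fun j _ => continuousOn_const.mul
      ((continuous_apply j).comp_continuousOn hb)
  have hcξ : ContinuousOn ξ (Set.Icc 0 T) := fun t ht =>
    (hξ t ht.1).continuousAt.continuousWithinAt
  have hcw : ContinuousOn w (Set.Icc 0 T) := hw.continuousOn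
  have hcd : ContinuousOn (fun t => Abar *ᵥ ξ t + Bbar *ᵥ w t) (Set.Icc 0 T) :=
    (hvecCont _ _ Abar ξ hcξ).add (hvecCont _ _ Bbar w hcw)
  have hcg : ContinuousOn (fun t => (Abar *ᵥ ξ t + Bbar *ᵥ w t) ⬝ᵥ X *ᵥ ξ t
      + ξ t ⬝ᵥ X *ᵥ (Abar *ᵥ ξ t + Bbar *ᵥ w t)) (Set.Icc 0 T) :=
    (hdotCont _ _ X _ ξ hcd hcξ).add (hdotCont _ _ X ξ _ hcξ hcd)
  have hcz : ContinuousOn (fun t => z t ⬝ᵥ Q *ᵥ z t) (Set.Icc 0 T) := by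
    have : (fun t => z t ⬝ᵥ Q *ᵥ z t)
        = fun t => (Cbar *ᵥ ξ t + Dbar *ᵥ w t) ⬝ᵥ Q *ᵥ (Cbar *ᵥ ξ t + Dbar *ᵥ w t) := by
      funext t; rw [hz t]
    rw [this]
    exact hdotCont _ _ Q _ _ ((hvecCont _ _ Cbar ξ hcξ).add (hvecCont _ _ Dbar w hcw))
      ((hvecCont _ _ Cbar ξ hcξ).add (hvecCont _ _ Dbar w hcw))
  have hcwP : ContinuousOn (fun t => w t ⬝ᵥ P *ᵥ w t) (Set.Icc 0 T) :=
    hdotCont _ _ P w w hcw hcw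
  -- interval integrability
  have hint_g : IntervalIntegrable (fun t => (Abar *ᵥ ξ t + Bbar *ᵥ w t) ⬝ᵥ X *ᵥ ξ t
      + ξ t ⬝ᵥ X *ᵥ (Abar *ᵥ ξ t + Bbar *ᵥ w t)) MeasureTheory.volume 0 T :=
    (hIcc ▸ hcg).intervalIntegrable
  have hint_z : IntervalIntegrable (fun t => z t ⬝ᵥ Q *ᵥ z t) MeasureTheory.volume 0 T :=
    (hIcc ▸ hcz).intervalIntegrable
  have hint_wP : IntervalIntegrable (fun t => w t ⬝ᵥ P *ᵥ w t) MeasureTheory.volume 0 T :=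
    (hIcc ▸ hcwP).intervalIntegrable
  have hint_rhs : IntervalIntegrable
      (fun t => γ ^ 2 * (w t ⬝ᵥ P *ᵥ w t) - ((Abar *ᵥ ξ t + Bbar *ᵥ w t) ⬝ᵥ X *ᵥ ξ t
        + ξ t ⬝ᵥ X *ᵥ (Abar *ᵥ ξ t + Bbar *ᵥ w t))) MeasureTheory.volume 0 T :=
    (hint_wP.const_mul (γ ^ 2)).sub hint_g
  -- FTC
  have hFTC : (∫ t in (0 : ℝ)..T, ((Abar *ᵥ ξ t + Bbar *ᵥ w t) ⬝ᵥ X *ᵥ ξ t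
      + ξ t ⬝ᵥ X *ᵥ (Abar *ᵥ ξ t + Bbar *ᵥ w t)))
      = ξ T ⬝ᵥ X *ᵥ ξ T - ξ 0 ⬝ᵥ X *ᵥ ξ 0 := by
    refine integral_eq_sub_of_hasDerivAt (f := fun τ => ξ τ ⬝ᵥ X *ᵥ ξ τ) (fun t ht => ?_) hint_g
    exact hV t (hIcc ▸ ht).1
  -- pointwise comparison
  have hpt : ∀ t ∈ Set.Icc (0 : ℝ) T, z t ⬝ᵥ Q *ᵥ z t
      ≤ γ ^ 2 * (w t ⬝ᵥ P *ᵥ w t) - ((Abar *ᵥ ξ t + Bbar *ᵥ w t) ⬝ᵥ X *ᵥ ξ t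
        + ξ t ⬝ᵥ X *ᵥ (Abar *ᵥ ξ t + Bbar *ᵥ w t)) := by
    intro t _
    have := key (ξ t) (w t)
    rw [hz t]
    linarith
  have hmono := intervalIntegral.integral_mono_on hT hint_z hint_rhs hpt
  have hsub : (∫ t in (0 : ℝ)..T, (γ ^ 2 * (w t ⬝ᵥ P *ᵥ w t)
      - ((Abar *ᵥ ξ t + Bbar *ᵥ w t) ⬝ᵥ X *ᵥ ξ t
        + ξ t ⬝ᵥ X *ᵥ (Abar *ᵥ ξ t + Bbar *ᵥ w t))))
      = γ ^ 2 * (∫ t in (0 : ℝ)..T, w t ⬝ᵥ P *ᵥ w t)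
        - (ξ T ⬝ᵥ X *ᵥ ξ T - ξ 0 ⬝ᵥ X *ᵥ ξ 0) := by
    rw [intervalIntegral.integral_sub (hint_wP.const_mul (γ ^ 2)) hint_g, hFTC,
      intervalIntegral.integral_const_mul]
  -- endpoint bounds
  have hVT : 0 ≤ ξ T ⬝ᵥ X *ᵥ ξ T := by simpa using hXpos.dotProduct_mulVec_nonneg (ξ T)
  have hV0 : ξ 0 ⬝ᵥ X *ᵥ ξ 0 ≤ γ ^ 2 * (ξ 0 ⬝ᵥ Hbar *ᵥ ξ 0) := by
    have := hXH.dotProduct_mulVec_nonneg (ξ 0)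
    simp only [star_trivial, sub_mulVec, smul_mulVec, dotProduct_sub,
      dotProduct_smul, smul_eq_mul, sub_nonneg] at this
    exact this
  rw [mul_add]
  linarith [hmono, hsub]
end

section
/- Let X, Y ∈ ℝ^{r×r} be symmetric and γ > 0. The 2r×2r block matrix W = [[X, γI_r],[γI_r, Y]] is positive semidefinite with rank W = r if and only if X is positive definite, Y is positive definite, and XY = γ²I_r. -/
open Matrix

private lemma aux_finrank (r : ℕ) :
    Module.finrank ℝ (Fin r ⊕ Fin r → ℝ) = r + r := by
  simp

private lemma aux_ext {r : ℕ} {M N : Matrix (Fin r) (Fin r) ℝ}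
    (h : ∀ v, M *ᵥ v = N *ᵥ v) : M = N := by
  have : Mᵀ = Nᵀ := by
    funext j
    show Matrix.col M j = Matrix.col N j
    rw [← mulVec_single_one, ← mulVec_single_one, h]
  simpa using congrArg Matrix.transpose this

/-- `W = [[X, γI],[γI, Y]] ≥ 0` with `rank W = r` iff
`X > 0`, `Y > 0` and `XY = γ²I`. -/
theorem stmt10 (r : ℕ)
    (X Y : Matrix (Fin r) (Fin r) ℝ) (hX : X.IsSymm) (hY : Y.IsSymm)
    (γ : ℝ) (hγ : 0 < γ)
    (W : Matrix (Fin r ⊕ Fin r) (Fin r ⊕ Fin r) ℝ)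
    (hW : W = fromBlocks X (γ • (1 : Matrix (Fin r) (Fin r) ℝ))
        (γ • (1 : Matrix (Fin r) (Fin r) ℝ)) Y) :
    (W.PosSemidef ∧ W.rank = r) ↔
      (X.PosDef ∧ Y.PosDef ∧ X * Y = γ ^ 2 • (1 : Matrix (Fin r) (Fin r) ℝ)) := by
  subst hW
  have hγ0 : γ ≠ 0 := hγ.ne'
  have hc : (γ ^ 2 : ℝ) ≠ 0 := pow_ne_zero 2 hγ0
  set Wm : Matrix (Fin r ⊕ Fin r) (Fin r ⊕ Fin r) ℝ :=
    fromBlocks X (γ • (1 : Matrix (Fin r) (Fin r) ℝ))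
      (γ • (1 : Matrix (Fin r) (Fin r) ℝ)) Y with hWm
  constructor
  · rintro ⟨hpsd, hrank⟩
    -- diagonal blocks are PSD
    have hXpsd : X.PosSemidef := by
      have h := hpsd.submatrix Sum.inl
      have he : Wm.submatrix (Sum.inl : Fin r → Fin r ⊕ Fin r) Sum.inl = X := by
        ext i j; simp [hWm]
      rwa [he] at h
    have hYpsd : Y.PosSemidef := by
      have h := hpsd.submatrix Sum.inr
      have he : Wm.submatrix (Sum.inr : Fin r → Fin r ⊕ Fin r) Sum.inr = Y := by
        ext i j; simp [hWm]
      rwa [he] at h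
    -- kernel dimension
    have hdim : Module.finrank ℝ ↥(LinearMap.ker Wm.mulVecLin) = r := by
      have h1 := LinearMap.finrank_range_add_finrank_ker Wm.mulVecLin
      rw [aux_finrank] at h1
      have h2 : Wm.rank = Module.finrank ℝ ↥(LinearMap.range Wm.mulVecLin) := rfl
      omega
    -- projection from the kernel to the first block is injective hence surjective
    let φ : ↥(LinearMap.ker Wm.mulVecLin) →ₗ[ℝ] (Fin r → ℝ) :=
      (LinearMap.funLeft ℝ ℝ Sum.inl).comp (LinearMap.ker Wm.mulVecLin).subtype
    have hblocks : ∀ u : Fin r ⊕ Fin r → ℝ, Wm *ᵥ u = 0 →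
        (X *ᵥ (u ∘ Sum.inl) + γ • (u ∘ Sum.inr) = 0 ∧
         γ • (u ∘ Sum.inl) + Y *ᵥ (u ∘ Sum.inr) = 0) := by
      intro u hu
      rw [hWm, fromBlocks_mulVec] at hu
      constructor
      · funext i
        have := congrFun hu (Sum.inl i)
        simpa [smul_mulVec] using this
      · funext i
        have := congrFun hu (Sum.inr i)
        simpa [smul_mulVec] using this
    have hinj : Function.Injective φ := by
      rw [← LinearMap.ker_eq_bot, LinearMap.ker_eq_bot']
      rintro ⟨u, hu⟩ h0
      have hu0 : Wm *ᵥ u = 0 := by simpa [Matrix.mulVecLin_apply] using hu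
      have hv0 : u ∘ Sum.inl = 0 := by
        simpa [φ, LinearMap.funLeft] using h0
      obtain ⟨e1, _⟩ := hblocks u hu0
      rw [hv0] at e1
      simp only [mulVec_zero, zero_add] at e1
      have hw0 : u ∘ Sum.inr = 0 := by
        have := smul_eq_zero.mp e1
        tauto
      have : u = 0 := by
        funext x
        cases x with
        | inl i => exact congrFun hv0 i
        | inr i => exact congrFun hw0 i
      simp [this]
    have hsurj : Function.Surjective φ :=
      (LinearMap.injective_iff_surjective_of_finrank_eq_finrank
        (by rw [hdim]; simp)).mp hinj
    -- deduce Y * X = γ² • 1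
    have hYX : Y * X = γ ^ 2 • 1 := by
      apply aux_ext
      intro v
      obtain ⟨⟨u, hu⟩, hφ⟩ := hsurj v
      have hu0 : Wm *ᵥ u = 0 := by simpa [Matrix.mulVecLin_apply] using hu
      have hv : u ∘ Sum.inl = v := by simpa [φ, LinearMap.funLeft] using hφ
      obtain ⟨e1, e2⟩ := hblocks u hu0
      rw [hv] at e1 e2
      have hw : u ∘ Sum.inr = -(γ⁻¹) • (X *ᵥ v) := by
        have : γ • (u ∘ Sum.inr) = -(X *ᵥ v) := by
          have := e1; linear_combination (norm := module) this
        calc u ∘ Sum.inr = γ⁻¹ • (γ • (u ∘ Sum.inr)) := by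
              rw [smul_smul, inv_mul_cancel₀ hγ0, one_smul]
          _ = -(γ⁻¹) • (X *ᵥ v) := by rw [this]; module
      rw [hw] at e2
      rw [mulVec_smul, mulVec_mulVec] at e2
      have : (Y * X) *ᵥ v = (γ * γ) • v := by
        have h := e2
        have : γ⁻¹ • ((Y * X) *ᵥ v) = γ • v := by
          linear_combination (norm := module) -h
        calc (Y * X) *ᵥ v = γ • (γ⁻¹ • ((Y * X) *ᵥ v)) := by
              rw [smul_smul, mul_inv_cancel₀ hγ0, one_smul]
          _ = (γ * γ) • v := by rw [this, smul_smul]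
      rw [this]
      rw [smul_mulVec, one_mulVec, pow_two]
    have h1 : ((γ ^ 2)⁻¹ • Y) * X = 1 := by
      rw [smul_mul, hYX, smul_smul, inv_mul_cancel₀ hc, one_smul]
    have h2 : X * ((γ ^ 2)⁻¹ • Y) = 1 := mul_eq_one_comm.mpr h1
    have hXY : X * Y = γ ^ 2 • 1 := by
      have h3 : (γ ^ 2)⁻¹ • (X * Y) = 1 := by rw [← mul_smul_comm]; exact h2
      calc X * Y = γ ^ 2 • ((γ ^ 2)⁻¹ • (X * Y)) := by
            rw [smul_smul, mul_inv_cancel₀ hc, one_smul]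
        _ = γ ^ 2 • 1 := by rw [h3]
    have hXd : X.PosDef := by
      refine PosDef.of_dotProduct_mulVec_pos hXpsd.1 (fun x hx => ?_)
      rcases (hXpsd.dotProduct_mulVec_nonneg x).lt_or_eq with h | h
      · exact h
      · exfalso
        apply hx
        have hx0 : X *ᵥ x = 0 := (hXpsd.dotProduct_mulVec_zero_iff x).mp h.symm
        have : ((γ ^ 2)⁻¹ • Y) *ᵥ (X *ᵥ x) = x := by
          rw [mulVec_mulVec, h1, one_mulVec]
        rw [hx0, mulVec_zero] at this
        exact this.symm
    have hYd : Y.PosDef := by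
      refine PosDef.of_dotProduct_mulVec_pos hYpsd.1 (fun x hx => ?_)
      rcases (hYpsd.dotProduct_mulVec_nonneg x).lt_or_eq with h | h
      · exact h
      · exfalso
        apply hx
        have hx0 : Y *ᵥ x = 0 := (hYpsd.dotProduct_mulVec_zero_iff x).mp h.symm
        have h1' : ((γ ^ 2)⁻¹ • X) * Y = 1 := by
          rw [smul_mul, hXY, smul_smul, inv_mul_cancel₀ hc, one_smul]
        have : ((γ ^ 2)⁻¹ • X) *ᵥ (Y *ᵥ x) = x := by
          rw [mulVec_mulVec, h1', one_mulVec]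
        rw [hx0, mulVec_zero] at this
        exact this.symm
    exact ⟨hXd, hYd, hXY⟩
  · rintro ⟨hXp, hYp, hXY⟩
    have h2 : X * ((γ ^ 2)⁻¹ • Y) = 1 := by
      rw [mul_smul_comm, hXY, smul_smul, inv_mul_cancel₀ hc, one_smul]
    have h1 : ((γ ^ 2)⁻¹ • Y) * X = 1 := mul_eq_one_comm.mp h2
    have hYX : Y * X = γ ^ 2 • 1 := by
      have h3 : (γ ^ 2)⁻¹ • (Y * X) = 1 := by rw [← smul_mul]; exact h1
      calc Y * X = γ ^ 2 • ((γ ^ 2)⁻¹ • (Y * X)) := by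
            rw [smul_smul, mul_inv_cancel₀ hc, one_smul]
        _ = γ ^ 2 • 1 := by rw [h3]
    haveI : Invertible X := X.invertibleOfIsUnitDet hXp.det_pos.ne'.isUnit
    have hXinv : X⁻¹ = (γ ^ 2)⁻¹ • Y := inv_eq_right_inv h2
    constructor
    · -- positive semidefinite via the Schur complement
      have hB : (γ • (1 : Matrix (Fin r) (Fin r) ℝ))ᴴ = γ • 1 := by
        simp
      have hWm' : Wm = fromBlocks X (γ • (1 : Matrix (Fin r) (Fin r) ℝ))
          (γ • (1 : Matrix (Fin r) (Fin r) ℝ))ᴴ Y := by rw [hB]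
      rw [hWm', PosDef.fromBlocks₁₁ _ _ hXp]
      have hz : Y - (γ • (1 : Matrix (Fin r) (Fin r) ℝ))ᴴ * X⁻¹ *
          (γ • (1 : Matrix (Fin r) (Fin r) ℝ)) = 0 := by
        rw [hB, hXinv]
        rw [smul_mul, one_mul, mul_smul_comm, mul_one, smul_smul, smul_smul]
        have : γ * γ * (γ ^ 2)⁻¹ = 1 := by field_simp
        rw [this, one_smul, sub_self]
      rw [hz]
      exact Matrix.PosSemidef.zero
    · -- rank = r via the kernel
      let ψ : (Fin r → ℝ) →ₗ[ℝ] (Fin r ⊕ Fin r → ℝ) :=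
        { toFun := fun v => Sum.elim v (-(γ⁻¹) • (X *ᵥ v))
          map_add' := by
            intro v w; funext x
            cases x with
            | inl i => simp
            | inr i => simp [mulVec_add, smul_add]
          map_smul' := by
            intro c v; funext x
            cases x with
            | inl i => simp
            | inr i =>
              simp [mulVec_smul, smul_smul, mul_comm, mul_assoc, mul_left_comm] }
      have hker : LinearMap.ker Wm.mulVecLin = LinearMap.range ψ := by
        ext u
        simp only [LinearMap.mem_ker, LinearMap.mem_range, Matrix.mulVecLin_apply]
        constructor
        · intro hu
          refine ⟨u ∘ Sum.inl, ?_⟩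
          rw [hWm, fromBlocks_mulVec] at hu
          have e1 : X *ᵥ (u ∘ Sum.inl) + γ • (u ∘ Sum.inr) = 0 := by
            funext i
            have := congrFun hu (Sum.inl i)
            simpa [smul_mulVec] using this
          have hw : u ∘ Sum.inr = -(γ⁻¹) • (X *ᵥ (u ∘ Sum.inl)) := by
            have h' : γ • (u ∘ Sum.inr) = -(X *ᵥ (u ∘ Sum.inl)) := by
              linear_combination (norm := module) e1
            calc u ∘ Sum.inr = γ⁻¹ • (γ • (u ∘ Sum.inr)) := by
                  rw [smul_smul, inv_mul_cancel₀ hγ0, one_smul]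
              _ = -(γ⁻¹) • (X *ᵥ (u ∘ Sum.inl)) := by rw [h']; module
          funext x
          cases x with
          | inl i => rfl
          | inr i => exact (congrFun hw i).symm
        · rintro ⟨v, rfl⟩
          show Wm *ᵥ Sum.elim v (-(γ⁻¹) • (X *ᵥ v)) = 0
          rw [hWm, fromBlocks_mulVec]
          have hl : (Sum.elim v (-(γ⁻¹) • (X *ᵥ v))) ∘ Sum.inl = v := rfl
          have hr : (Sum.elim v (-(γ⁻¹) • (X *ᵥ v))) ∘ Sum.inr
              = -(γ⁻¹) • (X *ᵥ v) := rfl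
          rw [hl, hr]
          have c1 : X *ᵥ v + (γ • (1 : Matrix (Fin r) (Fin r) ℝ)) *ᵥ
              (-(γ⁻¹) • (X *ᵥ v)) = 0 := by
            rw [smul_mulVec, one_mulVec, smul_smul]
            have : γ * -γ⁻¹ = -1 := by field_simp
            rw [this]
            module
          have c2 : (γ • (1 : Matrix (Fin r) (Fin r) ℝ)) *ᵥ v +
              Y *ᵥ (-(γ⁻¹) • (X *ᵥ v)) = 0 := by
            rw [smul_mulVec, one_mulVec, mulVec_smul, mulVec_mulVec, hYX,
              smul_mulVec, one_mulVec, smul_smul]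
            have : -γ⁻¹ * γ ^ 2 = -γ := by field_simp
            rw [this]
            module
          rw [c1, c2]
          funext x
          cases x <;> rfl
      have hψinj : Function.Injective ψ := by
        intro a b h
        funext i
        exact congrFun h (Sum.inl i)
      have hkerdim : Module.finrank ℝ ↥(LinearMap.ker Wm.mulVecLin) = r := by
        rw [hker, LinearMap.finrank_range_of_inj hψinj]
        simp
      have h1' := LinearMap.finrank_range_add_finrank_ker Wm.mulVecLin
      rw [aux_finrank, hkerdim] at h1'
      have h2' : Wm.rank = Module.finrank ℝ ↥(LinearMap.range Wm.mulVecLin) := rfl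
      omega
end

section
/- Let X ∈ ℝ^{r×r} be symmetric positive definite, γ > 0, S ∈ ℝ^{p×r}, and let Y ∈ ℝ^{r×r} be symmetric with Y − γ²X⁻¹ = SᵀS. Define X₁ = (1/γ)SX, X₂ = (1/γ²)SXSᵀ + I_p, and X̂ = [[X, X₁ᵀ],[X₁, X₂]]. Then X̂ is positive definite and the upper-left r×r block of γ²X̂⁻¹ equals Y. -/
open Matrix

/-- step 4 of the algorithm: with `Y − γ²X⁻¹ = SᵀS`,
`X₁ = (1/γ)SX`, `X₂ = (1/γ²)SXSᵀ + I`, the block matrix `X̂ = [[X, X₁ᵀ],[X₁, X₂]]`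
is positive definite and the upper-left `r×r` block of `γ²X̂⁻¹` equals `Y`. -/
theorem stmt12 (r p : ℕ)
    (X : Matrix (Fin r) (Fin r) ℝ) (hX : X.PosDef)
    (γ : ℝ) (hγ : 0 < γ)
    (S : Matrix (Fin p) (Fin r) ℝ)
    (Y : Matrix (Fin r) (Fin r) ℝ) (hYsymm : Y.IsSymm)
    (hY : Y - γ ^ 2 • X⁻¹ = Sᵀ * S)
    (X₁ : Matrix (Fin p) (Fin r) ℝ) (hX₁ : X₁ = (1 / γ) • (S * X))
    (X₂ : Matrix (Fin p) (Fin p) ℝ) (hX₂ : X₂ = (1 / γ ^ 2) • (S * X * Sᵀ) + 1)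
    (Xhat : Matrix (Fin r ⊕ Fin p) (Fin r ⊕ Fin p) ℝ)
    (hXhat : Xhat = fromBlocks X X₁ᵀ X₁ X₂) :
    Xhat.PosDef ∧ (γ ^ 2 • Xhat⁻¹).toBlocks₁₁ = Y := by
  have hγ' : γ ≠ 0 := hγ.ne'
  have hdet : IsUnit X.det := isUnit_iff_ne_zero.mpr hX.det_pos.ne'
  have hXi : X * X⁻¹ = 1 := X.mul_nonsing_inv hdet
  have hXT : Xᵀ = X := (by simpa using hX.1 : X.IsSymm).eq
  have hcan : ∀ B : Matrix (Fin r) (Fin p) ℝ, X⁻¹ * (X * B) = B :=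
    fun B => X.nonsing_inv_mul_cancel_left B hdet
  haveI : Invertible X := X.invertibleOfIsUnitDet hdet
  have hX₁T : X₁ᵀ = (1 / γ) • (X * Sᵀ) := by
    rw [hX₁, transpose_smul, transpose_mul, hXT]
  have hBH : (X₁ᵀ)ᴴ = X₁ := by simp
  have hXhat' : Xhat = fromBlocks X X₁ᵀ (X₁ᵀ)ᴴ X₂ := by rw [hBH, hXhat]
  -- Schur complement is 1
  have hschur : X₂ - (X₁ᵀ)ᴴ * X⁻¹ * X₁ᵀ = 1 := by
    rw [hBH, hX₁T, hX₁, hX₂]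
    simp only [Matrix.smul_mul, Matrix.mul_smul, smul_smul, Matrix.mul_assoc, hcan]
    module
  -- PosDef
  have hpd : Xhat.PosDef := by
    have hher : Xhat.IsHermitian := by
      rw [hXhat', IsHermitian.fromBlocks₁₁ _ _ hX.1, hschur]
      exact isHermitian_one
    refine PosDef.of_dotProduct_mulVec_pos hher fun x hx => ?_
    rw [hXhat', ← Sum.elim_comp_inl_inr x, dotProduct_mulVec,
      schur_complement_eq₁₁ _ _ _ _ hX.1, hschur, Matrix.vecMul_one]
    by_cases hy : x ∘ Sum.inr = 0
    · have hxl : x ∘ Sum.inl ≠ 0 := by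
        intro h
        apply hx
        rw [← Sum.elim_comp_inl_inr x, h, hy]
        simp
      rw [hy]
      simp only [mulVec_zero, add_zero, star_zero, dotProduct_zero]
      rw [← dotProduct_mulVec]
      exact hX.dotProduct_mulVec_pos hxl
    · refine add_pos_of_nonneg_of_pos ?_ (dotProduct_star_self_pos_iff.mpr hy)
      rw [← dotProduct_mulVec]
      exact hX.posSemidef.dotProduct_mulVec_nonneg _
  refine ⟨hpd, ?_⟩
  -- explicit inverse
  set M : Matrix (Fin r ⊕ Fin p) (Fin r ⊕ Fin p) ℝ :=
    fromBlocks (X⁻¹ + (1 / γ ^ 2) • (Sᵀ * S)) (-((1 / γ) • Sᵀ)) (-((1 / γ) • S)) 1 with hM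
  have hTL : X * (X⁻¹ + (1 / γ ^ 2) • (Sᵀ * S)) + X₁ᵀ * (-((1 / γ) • S)) = 1 := by
    rw [hX₁T]
    simp only [Matrix.mul_add, Matrix.mul_neg, Matrix.neg_mul, Matrix.smul_mul,
      Matrix.mul_smul, smul_smul, Matrix.mul_assoc, hXi]
    module
  have hTR : X * (-((1 / γ) • Sᵀ)) + X₁ᵀ * (1 : Matrix (Fin p) (Fin p) ℝ) = 0 := by
    rw [hX₁T, Matrix.mul_one, Matrix.mul_neg, Matrix.mul_smul]
    exact neg_add_cancel _
  have hBL : X₁ * (X⁻¹ + (1 / γ ^ 2) • (Sᵀ * S)) + X₂ * (-((1 / γ) • S)) = 0 := by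
    rw [hX₁, hX₂]
    simp only [Matrix.mul_add, Matrix.add_mul, Matrix.mul_neg, Matrix.neg_mul,
      Matrix.smul_mul, Matrix.mul_smul, smul_smul, Matrix.mul_assoc, hXi,
      Matrix.mul_one, Matrix.one_mul]
    module
  have hBR : X₁ * (-((1 / γ) • Sᵀ)) + X₂ * 1 = 1 := by
    rw [hX₁, hX₂]
    simp only [Matrix.mul_neg, Matrix.smul_mul, Matrix.mul_smul, smul_smul,
      Matrix.mul_assoc, Matrix.mul_one]
    module
  have hright : Xhat * M = 1 := by
    rw [hXhat, hM, fromBlocks_multiply, hTL, hTR, hBL, hBR, fromBlocks_one]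
  have hinv : Xhat⁻¹ = M := inv_eq_right_inv hright
  rw [hinv, hM]
  have hblk : (γ ^ 2 • fromBlocks (X⁻¹ + (1 / γ ^ 2) • (Sᵀ * S)) (-((1 / γ) • Sᵀ))
      (-((1 / γ) • S)) (1 : Matrix (Fin p) (Fin p) ℝ)).toBlocks₁₁
      = γ ^ 2 • (X⁻¹ + (1 / γ ^ 2) • (Sᵀ * S)) := rfl
  have h1 : γ ^ 2 * (1 / γ ^ 2) = 1 := by field_simp
  rw [hblk, smul_add, smul_smul, h1, one_smul, ← hY]
  abel
end

section
/- Let A ∈ ℝ^{n×n}, B₂ ∈ ℝ^{n×m}, C₂ ∈ ℝ^{l×n}, D₂₂ ∈ ℝ^{l×m}, and let K₁ ∈ ℝ^{m×l} be such that I_m − K₁D₂₂ is invertible; set K₁₀ = (I_m − K₁D₂₂)⁻¹K₁. If the (n−r)×(n−r) matrix E₁⊥ᵀ(A + B₂K₁₀C₂)E₂⊥ is invertible, then rank [[E, 0, 0],[A, E, B₂]] = n + r (the triple {E, A, B₂} is I-controllable) and rank [[E, A],[0, E],[0, C₂]] = n + r (the triple {E, A, C₂} is I-observable). -/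
open Matrix

section Aux

variable {R : Type*} [Field R] {m₁ m₂ n₁ n₂ m n : Type*}
  [Fintype m₁] [Fintype m₂] [Fintype n₁] [Fintype n₂] [Fintype m] [Fintype n]

lemma aux_fromColumns_add (a c : Matrix m n₁ R) (b d : Matrix m n₂ R) :
    fromCols a b + fromCols c d = fromCols (a + c) (b + d) := by
  ext i (j | j) <;> simp [fromCols]

lemma aux_fromRows_add (a c : Matrix m₁ n R) (b d : Matrix m₂ n R) :
    fromRows a b + fromRows c d = fromRows (a + c) (b + d) := by
  ext (i | i) j <;> simp

lemma aux_rank_add_le (A B : Matrix m n R) : (A + B).rank ≤ A.rank + B.rank := by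
  have hle : LinearMap.range (A + B).mulVecLin ≤
      LinearMap.range A.mulVecLin ⊔ LinearMap.range B.mulVecLin := by
    rintro x ⟨v, rfl⟩
    exact Submodule.mem_sup.mpr ⟨A.mulVecLin v, ⟨v, rfl⟩, B.mulVecLin v, ⟨v, rfl⟩,
      by simp [Matrix.mulVecLin_add]⟩
  calc (A + B).rank = Module.finrank R ↥(LinearMap.range (A + B).mulVecLin) := rfl
    _ ≤ Module.finrank R ↥(LinearMap.range A.mulVecLin ⊔ LinearMap.range B.mulVecLin) :=
        Submodule.finrank_mono hle
    _ ≤ A.rank + B.rank := Submodule.finrank_add_le_finrank_add_finrank _ _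

lemma aux_rank_fromRows_le (A : Matrix m₁ n R) (B : Matrix m₂ n R) :
    (fromRows A B).rank ≤ A.rank + B.rank := by
  classical
  have h : fromRows A B = fromRows A (0 : Matrix m₂ n R) + fromRows (0 : Matrix m₁ n R) B := by
    rw [aux_fromRows_add, add_zero, zero_add]
  have h1 : fromRows A (0 : Matrix m₂ n R) =
      fromRows (1 : Matrix m₁ m₁ R) (0 : Matrix m₂ m₁ R) * A := by
    rw [fromRows_mul, Matrix.one_mul, Matrix.zero_mul]
  have h2 : fromRows (0 : Matrix m₁ n R) B =
      fromRows (0 : Matrix m₁ m₂ R) (1 : Matrix m₂ m₂ R) * B := by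
    rw [fromRows_mul, Matrix.one_mul, Matrix.zero_mul]
  calc (fromRows A B).rank
      ≤ (fromRows A (0 : Matrix m₂ n R)).rank + (fromRows (0 : Matrix m₁ n R) B).rank := by
        rw [h]; exact aux_rank_add_le _ _
    _ ≤ A.rank + B.rank := by
        rw [h1, h2]
        exact Nat.add_le_add (Matrix.rank_mul_le_right _ _) (Matrix.rank_mul_le_right _ _)

lemma aux_rank_fromColumns_le (A : Matrix m n₁ R) (B : Matrix m n₂ R) :
    (fromCols A B).rank ≤ A.rank + B.rank := by
  rw [← Matrix.rank_transpose (fromCols A B), transpose_fromCols, ← Matrix.rank_transpose A,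
    ← Matrix.rank_transpose B]
  exact aux_rank_fromRows_le _ _

end Aux

/-- core lemma: if `E₁bᵀ (A + B W) E₂b` is invertible then `[E 0 0; A E B]` has rank `n + r`. -/
lemma key_rank (n r m : ℕ) (hrn : r ≤ n)
    (E₁ E₂ : Matrix (Fin n) (Fin r) ℝ) (E₁b E₂b : Matrix (Fin n) (Fin (n - r)) ℝ)
    (horth₁ : E₁ᵀ * E₁b = 0) (horth₂ : E₂ᵀ * E₂b = 0)
    (hG₁ : IsUnit (E₁ᵀ * E₁).det) (hG₂ : IsUnit (E₂ᵀ * E₂).det)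
    (A : Matrix (Fin n) (Fin n) ℝ) (B : Matrix (Fin n) (Fin m) ℝ)
    (W : Matrix (Fin m) (Fin n) ℝ)
    (himp : IsUnit (E₁bᵀ * (A + B * W) * E₂b).det) :
    (fromCols (fromBlocks (E₁ * E₂ᵀ) 0 A (E₁ * E₂ᵀ))
      (fromRows (0 : Matrix (Fin n) (Fin m) ℝ) B)).rank = n + r := by
  classical
  set E : Matrix (Fin n) (Fin n) ℝ := E₁ * E₂ᵀ with hE
  set M : Matrix (Fin n ⊕ Fin n) ((Fin n ⊕ Fin n) ⊕ Fin m) ℝ :=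
    fromCols (fromBlocks E 0 A E) (fromRows (0 : Matrix (Fin n) (Fin m) ℝ) B) with hM
  -- basic orthogonality facts
  have horth₁' : E₁bᵀ * E₁ = 0 := by
    have := congrArg Matrix.transpose horth₁
    simpa [Matrix.transpose_mul] using this
  have horth₂' : E₂bᵀ * E₂ = 0 := by
    have := congrArg Matrix.transpose horth₂
    simpa [Matrix.transpose_mul] using this
  have hE1bE : E₁bᵀ * E = 0 := by rw [hE, ← Matrix.mul_assoc, horth₁', Matrix.zero_mul]
  have hEE2b : E * E₂b = 0 := by rw [hE, Matrix.mul_assoc, horth₂, Matrix.mul_zero]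
  -- the invertible square product
  set Lr : Matrix (Fin r ⊕ Fin (n - r)) (Fin n) ℝ := fromRows E₁ᵀ E₁bᵀ with hLr
  set L : Matrix (Fin r ⊕ (Fin r ⊕ Fin (n - r))) (Fin n ⊕ Fin n) ℝ :=
    fromBlocks E₁ᵀ 0 0 Lr with hL
  set Ntop : Matrix (Fin n ⊕ Fin n) (Fin r ⊕ (Fin r ⊕ Fin (n - r))) ℝ :=
    fromBlocks E₂ (fromCols 0 E₂b) 0 (fromCols E₂ 0) with hNtop
  set Nbot : Matrix (Fin m) (Fin r ⊕ (Fin r ⊕ Fin (n - r))) ℝ :=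
    fromCols 0 (fromCols 0 (W * E₂b)) with hNbot
  set N : Matrix ((Fin n ⊕ Fin n) ⊕ Fin m) (Fin r ⊕ (Fin r ⊕ Fin (n - r))) ℝ :=
    fromRows Ntop Nbot with hN
  set F : Matrix (Fin n) (Fin n) ℝ := A + B * W with hF
  -- compute L * M * N
  have hLM : L * M = fromCols (L * fromBlocks E 0 A E)
      (L * fromRows (0 : Matrix (Fin n) (Fin m) ℝ) B) := by
    rw [hM, Matrix.mul_fromCols]
  have hLMl : L * fromBlocks E 0 A E =
      fromBlocks (E₁ᵀ * E) 0 (Lr * A) (Lr * E) := by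
    rw [hL, Matrix.fromBlocks_multiply]
    simp
  have hLrE : Lr * E = fromRows (E₁ᵀ * E) 0 := by
    rw [hLr, Matrix.fromRows_mul, hE1bE]
  have hLMr : L * fromRows (0 : Matrix (Fin n) (Fin m) ℝ) B = fromRows 0 (Lr * B) := by
    rw [hL, ← Matrix.fromCols_fromRows_eq_fromBlocks, Matrix.fromCols_mul_fromRows]
    simp
  have hprod : (L * M) * N =
      (fromBlocks (E₁ᵀ * E) 0 (Lr * A) (Lr * E)) * Ntop + (fromRows 0 (Lr * B)) * Nbot := by
    rw [hLM, hN, Matrix.fromCols_mul_fromRows, hLMl, hLMr]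
  have hXN : (fromBlocks (E₁ᵀ * E) 0 (Lr * A) (Lr * E)) * Ntop =
      fromBlocks (E₁ᵀ * E * E₂) 0 (Lr * A * E₂)
        (fromCols (Lr * E * E₂) (Lr * A * E₂b)) := by
    have hz : E₁ᵀ * E * E₂b = 0 := by rw [Matrix.mul_assoc, hEE2b, Matrix.mul_zero]
    rw [hNtop, Matrix.fromBlocks_multiply]
    simp only [Matrix.mul_fromCols, Matrix.mul_zero, Matrix.zero_mul, add_zero, zero_add,
      hz, aux_fromColumns_add, fromCols_zero]
  have hYN : (fromRows (0 : Matrix (Fin r) (Fin m) ℝ) (Lr * B)) * Nbot =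
      fromBlocks 0 0 0 (fromCols 0 (Lr * B * (W * E₂b))) := by
    rw [hNbot, Matrix.fromRows_mul]
    simp only [Matrix.zero_mul, Matrix.mul_fromCols, Matrix.mul_zero]
    rw [← Matrix.fromRows_fromCols_eq_fromBlocks, fromCols_zero]
  have hP : (L * M) * N = fromBlocks (E₁ᵀ * E * E₂) 0 (Lr * A * E₂)
      (fromCols (Lr * E * E₂) (Lr * F * E₂b)) := by
    have hFe : Lr * A * E₂b + Lr * B * (W * E₂b) = Lr * F * E₂b := by
      rw [hF]
      simp [Matrix.mul_add, Matrix.add_mul, Matrix.mul_assoc]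
    rw [hprod, hXN, hYN, Matrix.fromBlocks_add, add_zero, add_zero, add_zero,
      aux_fromColumns_add, add_zero, hFe]
  -- the product is invertible
  have hGG : IsUnit (E₁ᵀ * E * E₂).det := by
    simp only [hE, Matrix.mul_assoc]
    rw [← Matrix.mul_assoc, Matrix.det_mul]
    exact hG₁.mul hG₂
  have hD : IsUnit ((fromCols (Lr * E * E₂) (Lr * F * E₂b)).det) := by
    have hc : fromCols (Lr * E * E₂) (Lr * F * E₂b) =
        fromBlocks (E₁ᵀ * E * E₂) (E₁ᵀ * F * E₂b) 0 (E₁bᵀ * F * E₂b) := by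
      rw [← Matrix.fromCols_fromRows_eq_fromBlocks, hLrE, hLr]
      simp only [Matrix.fromRows_mul, Matrix.zero_mul]
    rw [hc, Matrix.det_fromBlocks_zero₂₁]
    exact hGG.mul himp
  have hPdet : IsUnit ((L * M * N).det) := by
    rw [hP, Matrix.det_fromBlocks_zero₁₂]
    exact hGG.mul hD
  have hPrank : (L * M * N).rank = n + r := by
    have := Matrix.rank_of_isUnit _ ((Matrix.isUnit_iff_isUnit_det _).mpr hPdet)
    rw [this]
    simp only [Fintype.card_sum, Fintype.card_fin]
    omega
  -- lower bound
  have hlow : n + r ≤ M.rank := by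
    calc n + r = (L * M * N).rank := hPrank.symm
      _ ≤ (L * M).rank := Matrix.rank_mul_le_left _ _
      _ ≤ M.rank := Matrix.rank_mul_le_right _ _
  -- upper bound
  have hMdecomp : M = fromRows
      (fromCols (fromCols E (0 : Matrix (Fin n) (Fin n) ℝ)) (0 : Matrix (Fin n) (Fin m) ℝ))
      (fromCols (fromCols A E) B) := by
    rw [hM, ← Matrix.fromRows_fromCols_eq_fromBlocks, Matrix.fromCols_fromRows_eq_fromBlocks,
      Matrix.fromRows_fromCols_eq_fromBlocks]
  have hErank : E.rank ≤ r := by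
    calc E.rank ≤ E₁.rank := by rw [hE]; exact Matrix.rank_mul_le_left _ _
      _ ≤ r := by simpa using E₁.rank_le_card_width
  have htop : (fromCols (fromCols E (0 : Matrix (Fin n) (Fin n) ℝ))
      (0 : Matrix (Fin n) (Fin m) ℝ)).rank ≤ r := by
    calc (fromCols (fromCols E (0 : Matrix (Fin n) (Fin n) ℝ))
          (0 : Matrix (Fin n) (Fin m) ℝ)).rank
        ≤ (fromCols E (0 : Matrix (Fin n) (Fin n) ℝ)).rank
            + (0 : Matrix (Fin n) (Fin m) ℝ).rank := aux_rank_fromColumns_le _ _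
      _ ≤ (E.rank + (0 : Matrix (Fin n) (Fin n) ℝ).rank)
            + (0 : Matrix (Fin n) (Fin m) ℝ).rank :=
          Nat.add_le_add_right (aux_rank_fromColumns_le _ _) _
      _ ≤ r := by rw [Matrix.rank_zero, Matrix.rank_zero, add_zero, add_zero]; exact hErank
  have hbot : (fromCols (fromCols A E) B).rank ≤ n := by
    simpa using (fromCols (fromCols A E) B).rank_le_card_height
  have hup : M.rank ≤ n + r := by
    calc M.rank ≤ (fromCols (fromCols E (0 : Matrix (Fin n) (Fin n) ℝ))
          (0 : Matrix (Fin n) (Fin m) ℝ)).rank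
          + (fromCols (fromCols A E) B).rank := by
          rw [hMdecomp] at hlow ⊢; exact aux_rank_fromRows_le _ _
      _ ≤ r + n := Nat.add_le_add htop hbot
      _ = n + r := Nat.add_comm r n
  omega

/-- if some static output feedback `K₁` makes the pair impulse-free,
i.e. `E₁⊥ᵀ(A + B₂K₁₀C₂)E₂⊥` is invertible (where `K₁₀ = (I − K₁D₂₂)⁻¹K₁`), then the
triple `{E, A, B₂}` is I-controllable and the triple `{E, A, C₂}` is I-observable. -/
theorem stmt15 (n r m l : ℕ) (hr : 0 < r) (hrn : r < n)
    (E : Matrix (Fin n) (Fin n) ℝ)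
    (E₁ E₂ : Matrix (Fin n) (Fin r) ℝ)
    (E₁b E₂b : Matrix (Fin n) (Fin (n - r)) ℝ)
    (hErank : E.rank = r)
    (hskel : E = E₁ * E₂ᵀ)
    (hE₁rank : E₁.rank = r) (hE₂rank : E₂.rank = r)
    (horth₁ : E₁ᵀ * E₁b = 0) (horth₂ : E₂ᵀ * E₂b = 0)
    (hinv₁ : ∃ M : Matrix (Fin r ⊕ Fin (n - r)) (Fin n) ℝ,
      fromCols E₁ E₁b * M = 1 ∧ M * fromCols E₁ E₁b = 1)
    (hinv₂ : ∃ M : Matrix (Fin r ⊕ Fin (n - r)) (Fin n) ℝ,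
      fromCols E₂ E₂b * M = 1 ∧ M * fromCols E₂ E₂b = 1)
    (A : Matrix (Fin n) (Fin n) ℝ) (B₂ : Matrix (Fin n) (Fin m) ℝ)
    (C₂ : Matrix (Fin l) (Fin n) ℝ) (D₂₂ : Matrix (Fin l) (Fin m) ℝ)
    (K₁ : Matrix (Fin m) (Fin l) ℝ)
    (hK₁ : IsUnit ((1 : Matrix (Fin m) (Fin m) ℝ) - K₁ * D₂₂).det)
    (K₁₀ : Matrix (Fin m) (Fin l) ℝ)
    (hK₁₀ : K₁₀ = ((1 : Matrix (Fin m) (Fin m) ℝ) - K₁ * D₂₂)⁻¹ * K₁)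
    (himp : IsUnit (E₁bᵀ * (A + B₂ * K₁₀ * C₂) * E₂b).det) :
    (fromCols (fromBlocks E 0 A E) (fromRows (0 : Matrix (Fin n) (Fin m) ℝ) B₂)).rank
        = n + r ∧
    (fromRows (fromBlocks E A 0 E) (fromCols (0 : Matrix (Fin l) (Fin n) ℝ) C₂)).rank
        = n + r := by
  classical
  -- Gram matrices are invertible
  have gram : ∀ (F₁ : Matrix (Fin n) (Fin r) ℝ) (F₁b : Matrix (Fin n) (Fin (n - r)) ℝ),
      F₁ᵀ * F₁b = 0 →
      (∃ M : Matrix (Fin r ⊕ Fin (n - r)) (Fin n) ℝ,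
        fromCols F₁ F₁b * M = 1 ∧ M * fromCols F₁ F₁b = 1) →
      IsUnit (F₁ᵀ * F₁).det := by
    intro F₁ F₁b horth hinv
    obtain ⟨Minv, hMr, hMl⟩ := hinv
    set Q := fromCols F₁ F₁b with hQ
    have h1 : (Qᵀ * Q) * (Minv * Minvᵀ) = 1 := by
      rw [Matrix.mul_assoc, ← Matrix.mul_assoc Q, hMr, Matrix.one_mul, ← Matrix.transpose_mul,
        hMl, Matrix.transpose_one]
    have hunit : IsUnit ((Qᵀ * Q).det) := Matrix.isUnit_det_of_right_inverse h1
    have hQQ : Qᵀ * Q = fromBlocks (F₁ᵀ * F₁) 0 0 (F₁bᵀ * F₁b) := by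
      have horth' : F₁bᵀ * F₁ = 0 := by
        have := congrArg Matrix.transpose horth
        simpa [Matrix.transpose_mul] using this
      rw [hQ, Matrix.transpose_fromCols, Matrix.fromRows_mul, Matrix.mul_fromCols,
        Matrix.mul_fromCols, horth, horth', ← Matrix.fromRows_fromCols_eq_fromBlocks]
    rw [hQQ, Matrix.det_fromBlocks_zero₁₂] at hunit
    exact isUnit_of_mul_isUnit_left hunit
  have hG₁ : IsUnit (E₁ᵀ * E₁).det := gram E₁ E₁b horth₁ hinv₁
  have hG₂ : IsUnit (E₂ᵀ * E₂).det := gram E₂ E₂b horth₂ hinv₂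
  constructor
  · rw [hskel]
    refine key_rank n r m hrn.le E₁ E₂ E₁b E₂b horth₁ horth₂ hG₁ hG₂ A B₂ (K₁₀ * C₂) ?_
    rwa [← Matrix.mul_assoc]
  · -- observability via transpose
    rw [← Matrix.rank_transpose, Matrix.transpose_fromRows, Matrix.fromBlocks_transpose,
      Matrix.transpose_fromCols, Matrix.transpose_zero]
    have hEt : Eᵀ = E₂ * E₁ᵀ := by rw [hskel, Matrix.transpose_mul, Matrix.transpose_transpose]
    rw [hEt]
    refine key_rank n r l hrn.le E₂ E₁ E₂b E₁b horth₂ horth₁ hG₂ hG₁ Aᵀ C₂ᵀ (K₁₀ᵀ * B₂ᵀ) ?_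
    have : Aᵀ + C₂ᵀ * (K₁₀ᵀ * B₂ᵀ) = (A + B₂ * K₁₀ * C₂)ᵀ := by
      rw [Matrix.transpose_add, Matrix.transpose_mul, Matrix.transpose_mul]
    rw [this]
    have h2 : E₂bᵀ * (A + B₂ * K₁₀ * C₂)ᵀ * E₁b = (E₁bᵀ * (A + B₂ * K₁₀ * C₂) * E₂b)ᵀ := by
      rw [Matrix.transpose_mul, Matrix.transpose_mul, Matrix.transpose_transpose,
        Matrix.mul_assoc]
    rw [h2, Matrix.det_transpose]
    exact himp
end

section
/- Let Ā ∈ ℝ^{r×r}, B̄₁ ∈ ℝ^{r×s}, B̄₂ ∈ ℝ^{r×m}, C̄₁ ∈ ℝ^{k×r}, D̄₁₁ ∈ ℝ^{k×s}, D̄₁₂ ∈ ℝ^{k×m}, C̄₂ ∈ ℝ^{l×r} with rank C̄₂ = r (so l ≥ r). Let P ∈ ℝ^{s×s} and Q ∈ ℝ^{k×k} be symmetric positive definite, γ > 0, Y ∈ ℝ^{r×r} symmetric positive definite, and X = γ²Y⁻¹. Then there exists K ∈ ℝ^{m×l} such that Ω + L₀ᵀKR₀ + R₀ᵀKᵀL₀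 < 0, where Ω = [[ĀᵀX + XĀ, XB̄₁, C̄₁ᵀ],[B̄₁ᵀX, −γ²P, D̄₁₁ᵀ],[C̄₁, D̄₁₁, −Q⁻¹]], L₀ = [B̄₂ᵀX, 0_{m×s}, D̄₁₂ᵀ], R₀ = [C̄₂, 0_{l×s}, 0_{l×k}], if and only if there exists Z ∈ ℝ^{m×r} such that [[γ²(ĀY + YĀᵀ + B̄₂Z + ZᵀB̄₂ᵀ), γ²B̄₁, YC̄₁ᵀ + ZᵀD̄₁₂ᵀ],[γ²B̄₁ᵀ, −γ²P, D̄₁₁ᵀ],[C̄₁Y + D̄₁₂Z, D̄₁₁, −Q⁻¹]] < 0. Moreover, when K satisfies the first inequality, Z = KC̄₂Y satisfies the second, and when Z satisfies the second, any K solving KC̄₂Y = Z satisfies the first. -/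
open Matrix

set_option linter.unusedSectionVars false
set_option maxHeartbeats 1000000

section Helpers

variable {R : Type*} [Semiring R] {m₁ m₂ n₁ n₂ p q : Type*}

@[local simp] lemma myh1 (A : Matrix m₁ p R) (B : Matrix m₂ p R) :
    fromCols (fromRows A B) (0 : Matrix (m₁ ⊕ m₂) q R) = fromBlocks A 0 B 0 := by
  ext (i|i) (j|j) <;> simp [fromBlocks]

@[local simp] lemma myh2 (A : Matrix m₁ p R) (B : Matrix m₂ p R) :
    fromCols (0 : Matrix (m₁ ⊕ m₂) q R) (fromRows A B) = fromBlocks 0 A 0 B := by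
  ext (i|i) (j|j) <;> simp [fromBlocks]

@[local simp] lemma myh3 (A : Matrix m₁ n₁ R) (B : Matrix m₁ n₂ R) (C : Matrix m₂ n₁ R)
    (D : Matrix m₂ n₂ R) (E : Matrix m₁ q R) (F : Matrix m₂ q R) :
    fromCols (fromBlocks A B C D) (fromRows E F) =
      fromBlocks (fromCols A B) E (fromCols C D) F := by
  ext (i|i) ((j|j)|j) <;> simp [fromBlocks]

@[local simp] lemma myh4 (A : Matrix m₁ n₁ R) (B : Matrix m₁ n₂ R) (C : Matrix m₂ n₁ R)
    (D : Matrix m₂ n₂ R) :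
    fromCols (fromBlocks A B C D) (0 : Matrix (m₁ ⊕ m₂) q R) =
      fromBlocks (fromCols A B) 0 (fromCols C D) 0 := by
  ext (i|i) ((j|j)|j) <;> simp [fromBlocks]

@[local simp] lemma myRadd (A C : Matrix m₁ p R) (B D : Matrix m₂ p R) :
    fromRows A B + fromRows C D = fromRows (A + C) (B + D) := by
  ext (i|i) j <;> simp

@[local simp] lemma myCadd (A C : Matrix p n₁ R) (B D : Matrix p n₂ R) :
    fromCols A B + fromCols C D = fromCols (A + C) (B + D) := by
  ext i (j|j) <;> simp

@[local simp] lemma myRsmul {S : Type*} [Monoid S] [DistribMulAction S R] (a : S)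
    (A : Matrix m₁ p R) (B : Matrix m₂ p R) :
    a • fromRows A B = fromRows (a • A) (a • B) := by
  ext (i|i) j <;> simp

@[local simp] lemma myCsmul {S : Type*} [Monoid S] [DistribMulAction S R] (a : S)
    (A : Matrix p n₁ R) (B : Matrix p n₂ R) :
    a • fromCols A B = fromCols (a • A) (a • B) := by
  ext i (j|j) <;> simp

end Helpers

lemma myPosDef_mul_mul {n : Type*} [Fintype n] [DecidableEq n] {M T : Matrix n n ℝ}
    (hM : M.PosDef) (hT : IsUnit T) : (Tᵀ * M * T).PosDef := by
  refine Matrix.PosDef.of_dotProduct_mulVec_pos ?_ ?_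
  · simpa using isHermitian_conjTranspose_mul_mul T hM.1
  · intro x hx
    have hx' : T *ᵥ x ≠ 0 := by
      intro h
      exact hx (Matrix.mulVec_injective_iff_isUnit.2 hT (h.trans (Matrix.mulVec_zero T).symm))
    have h2 := hM.dotProduct_mulVec_pos hx'
    have e : (Tᵀ * M * T) *ᵥ x = Tᵀ *ᵥ (M *ᵥ (T *ᵥ x)) := by
      simp [← Matrix.mulVec_mulVec]
    rw [e, Matrix.dotProduct_mulVec, star_trivial, Matrix.vecMul_transpose]
    simpa only [star_trivial] using h2

lemma myPosDef_congr {n : Type*} [Fintype n] [DecidableEq n] {M : Matrix n n ℝ}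
    (T : Matrix n n ℝ) (hT : IsUnit T) : (Tᵀ * M * T).PosDef ↔ M.PosDef := by
  constructor
  · intro h
    have hT' : IsUnit T⁻¹ := (Matrix.isUnit_nonsing_inv_iff).2 hT
    have := myPosDef_mul_mul h hT'
    have e : (T⁻¹)ᵀ * (Tᵀ * M * T) * T⁻¹ = M := by
      have h1 : T * T⁻¹ = 1 := Matrix.mul_nonsing_inv T (isUnit_iff_isUnit_det T |>.1 hT)
      calc (T⁻¹)ᵀ * (Tᵀ * M * T) * T⁻¹ = ((T * T⁻¹)ᵀ) * M * (T * T⁻¹) := by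
            rw [transpose_mul]; simp only [Matrix.mul_assoc]
        _ = M := by rw [h1]; simp
    rwa [e] at this
  · exact fun h => myPosDef_mul_mul h hT

lemma myIsUnit_of_rank {r : ℕ} (G : Matrix (Fin r) (Fin r) ℝ) (h : G.rank = r) : IsUnit G := by
  rw [← Matrix.mulVec_surjective_iff_isUnit]
  have ht : LinearMap.range G.mulVecLin = ⊤ := by
    apply Submodule.eq_top_of_finrank_eq
    rw [← Matrix.rank, h]
    simp [Module.finrank_pi]
  intro y
  have hy : y ∈ LinearMap.range G.mulVecLin := by rw [ht]; trivial
  obtain ⟨x, hx⟩ := hy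
  exact ⟨x, hx⟩

/-- static output feedback with full-rank measurement, `X = γ²Y⁻¹`:
existence of `K` with `Ω + L₀ᵀKR₀ + R₀ᵀKᵀL₀ < 0` is equivalent to existence of `Z`
satisfying the `Y`-form LMI; `Z = KC̄₂Y` transfers one into the other. -/
theorem stmt16 (r s k m l : ℕ)
    (Abar : Matrix (Fin r) (Fin r) ℝ)
    (B₁bar : Matrix (Fin r) (Fin s) ℝ) (B₂bar : Matrix (Fin r) (Fin m) ℝ)
    (C₁bar : Matrix (Fin k) (Fin r) ℝ)
    (D₁₁bar : Matrix (Fin k) (Fin s) ℝ) (D₁₂bar : Matrix (Fin k) (Fin m) ℝ)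
    (C₂bar : Matrix (Fin l) (Fin r) ℝ)
    (hC₂rank : C₂bar.rank = r) (hlr : r ≤ l)
    (P : Matrix (Fin s) (Fin s) ℝ) (Q : Matrix (Fin k) (Fin k) ℝ)
    (hP : P.PosDef) (hQ : Q.PosDef)
    (γ : ℝ) (hγ : 0 < γ)
    (Y : Matrix (Fin r) (Fin r) ℝ) (hYsymm : Y.IsSymm) (hY : Y.PosDef)
    (X : Matrix (Fin r) (Fin r) ℝ) (hX : X = γ ^ 2 • Y⁻¹)
    (Ω : Matrix ((Fin r ⊕ Fin s) ⊕ Fin k) ((Fin r ⊕ Fin s) ⊕ Fin k) ℝ)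
    (hΩ : Ω = fromBlocks
      (fromBlocks (Abarᵀ * X + X * Abar) (X * B₁bar) (B₁barᵀ * X) (-(γ ^ 2 • P)))
      (fromRows C₁barᵀ D₁₁barᵀ)
      (fromCols C₁bar D₁₁bar)
      (-Q⁻¹))
    (L₀ : Matrix (Fin m) ((Fin r ⊕ Fin s) ⊕ Fin k) ℝ)
    (hL₀ : L₀ = fromCols (fromCols (B₂barᵀ * X) (0 : Matrix (Fin m) (Fin s) ℝ)) D₁₂barᵀ)
    (R₀ : Matrix (Fin l) ((Fin r ⊕ Fin s) ⊕ Fin k) ℝ)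
    (hR₀ : R₀ = fromCols (fromCols C₂bar (0 : Matrix (Fin l) (Fin s) ℝ))
      (0 : Matrix (Fin l) (Fin k) ℝ))
    (LMI₁ : Matrix (Fin m) (Fin l) ℝ → Prop)
    (hLMI₁ : LMI₁ = fun K => (-(Ω + L₀ᵀ * K * R₀ + R₀ᵀ * Kᵀ * L₀)).PosDef)
    (LMI₂ : Matrix (Fin m) (Fin r) ℝ → Prop)
    (hLMI₂ : LMI₂ = fun Z => (-(fromBlocks
      (fromBlocks (γ ^ 2 • (Abar * Y + Y * Abarᵀ + B₂bar * Z + Zᵀ * B₂barᵀ))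
        (γ ^ 2 • B₁bar) (γ ^ 2 • B₁barᵀ) (-(γ ^ 2 • P)))
      (fromRows (Y * C₁barᵀ + Zᵀ * D₁₂barᵀ) D₁₁barᵀ)
      (fromCols (C₁bar * Y + D₁₂bar * Z) D₁₁bar)
      (-Q⁻¹))).PosDef) :
    ((∃ K : Matrix (Fin m) (Fin l) ℝ, LMI₁ K) ↔ (∃ Z : Matrix (Fin m) (Fin r) ℝ, LMI₂ Z)) ∧
    (∀ K : Matrix (Fin m) (Fin l) ℝ, LMI₁ K → LMI₂ (K * C₂bar * Y)) ∧
    (∀ (Z : Matrix (Fin m) (Fin r) ℝ) (K : Matrix (Fin m) (Fin l) ℝ),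
      LMI₂ Z → K * C₂bar * Y = Z → LMI₁ K) := by
  subst hX hΩ hL₀ hR₀
  have hYdet : IsUnit Y.det := (Matrix.isUnit_iff_isUnit_det Y).1 hY.isUnit
  have hY1 : Y⁻¹ * Y = 1 := Matrix.nonsing_inv_mul Y hYdet
  have hY2 : Y * Y⁻¹ = 1 := Matrix.mul_nonsing_inv Y hYdet
  set T : Matrix ((Fin r ⊕ Fin s) ⊕ Fin k) ((Fin r ⊕ Fin s) ⊕ Fin k) ℝ :=
    fromBlocks (fromBlocks Y (0:Matrix (Fin r) (Fin s) ℝ) 0 (1:Matrix (Fin s) (Fin s) ℝ))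
      (0 : Matrix (Fin r ⊕ Fin s) (Fin k) ℝ) 0 (1 : Matrix (Fin k) (Fin k) ℝ) with hT
  have hTt : Tᵀ = T := by
    simp [hT, Matrix.fromBlocks_transpose, hYsymm.eq]
  have hTunit : IsUnit T := by
    rw [Matrix.isUnit_iff_isUnit_det, hT, Matrix.det_fromBlocks_zero₂₁,
      Matrix.det_fromBlocks_zero₂₁]
    simpa using hYdet
  have key : ∀ K : Matrix (Fin m) (Fin l) ℝ,
      T * ((fromBlocks
      (fromBlocks (Abarᵀ * (γ ^ 2 • Y⁻¹) + (γ ^ 2 • Y⁻¹) * Abar) ((γ ^ 2 • Y⁻¹) * B₁bar)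
        (B₁barᵀ * (γ ^ 2 • Y⁻¹)) (-(γ ^ 2 • P)))
      (fromRows C₁barᵀ D₁₁barᵀ)
      (fromCols C₁bar D₁₁bar)
      (-Q⁻¹))
      + (fromCols (fromCols (B₂barᵀ * (γ ^ 2 • Y⁻¹)) (0 : Matrix (Fin m) (Fin s) ℝ)) D₁₂barᵀ)ᵀ * K *
        (fromCols (fromCols C₂bar (0 : Matrix (Fin l) (Fin s) ℝ)) (0 : Matrix (Fin l) (Fin k) ℝ))
      + (fromCols (fromCols C₂bar (0 : Matrix (Fin l) (Fin s) ℝ)) (0 : Matrix (Fin l) (Fin k) ℝ))ᵀ * Kᵀ *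
        (fromCols (fromCols (B₂barᵀ * (γ ^ 2 • Y⁻¹)) (0 : Matrix (Fin m) (Fin s) ℝ)) D₁₂barᵀ)) * T
    = (fromBlocks
      (fromBlocks (γ ^ 2 • (Abar * Y + Y * Abarᵀ + B₂bar * (K * C₂bar * Y) + (K * C₂bar * Y)ᵀ * B₂barᵀ))
        (γ ^ 2 • B₁bar) (γ ^ 2 • B₁barᵀ) (-(γ ^ 2 • P)))
      (fromRows (Y * C₁barᵀ + (K * C₂bar * Y)ᵀ * D₁₂barᵀ) D₁₁barᵀ)
      (fromCols (C₁bar * Y + D₁₂bar * (K * C₂bar * Y)) D₁₁bar)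
      (-Q⁻¹)) := by
    intro K
    have hYc : ∀ (j : ℕ) (A : Matrix (Fin r) (Fin j) ℝ), Y * (Y⁻¹ * A) = A := by
      intro j A; rw [← Matrix.mul_assoc, hY2, Matrix.one_mul]
    have hYit : Y⁻¹ᵀ = Y⁻¹ := by rw [Matrix.transpose_nonsing_inv, hYsymm.eq]
    rw [hT]
    simp only [Matrix.transpose_fromCols, Matrix.fromBlocks_transpose, Matrix.transpose_fromRows,
      Matrix.transpose_zero, Matrix.transpose_one, Matrix.transpose_mul, Matrix.transpose_smul,
      Matrix.transpose_transpose, hYit, hYsymm.eq,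
      Matrix.add_mul, Matrix.mul_add,
      Matrix.fromBlocks_multiply, Matrix.fromRows_mul, Matrix.mul_fromCols,
      Matrix.fromRows_mul_fromCols, Matrix.fromCols_mul_fromBlocks,
      Matrix.fromBlocks_mul_fromRows, Matrix.fromCols_mul_fromRows,
      Matrix.mul_zero, Matrix.zero_mul, Matrix.mul_one, Matrix.one_mul,
      add_zero, zero_add, Matrix.fromBlocks_add,
      Matrix.smul_mul, Matrix.mul_smul, Matrix.mul_assoc,
      myh1, myh2, myh3, myh4, myRadd, myCadd, Matrix.fromRows_zero, Matrix.fromCols_zero,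
      smul_zero, hY1, hY2, hYc, myRsmul, myCsmul]
    rw [Matrix.fromBlocks_inj]
    refine ⟨?_, ?_, ?_, ?_⟩ <;>
      simp [Matrix.fromBlocks_inj, Matrix.fromRows_ext_iff, Matrix.fromCols_ext_iff,
        Matrix.transpose_mul, hYsymm.eq, smul_add, Matrix.mul_assoc] <;> abel
  have main : ∀ K : Matrix (Fin m) (Fin l) ℝ, LMI₁ K ↔ LMI₂ (K * C₂bar * Y) := by
    intro K
    simp only [hLMI₁, hLMI₂]
    rw [← myPosDef_congr T hTunit, hTt, Matrix.mul_neg, Matrix.neg_mul, key K]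
  refine ⟨⟨fun ⟨K, hK⟩ => ⟨K * C₂bar * Y, (main K).1 hK⟩, ?_⟩,
    fun K hK => (main K).1 hK,
    fun Z K hZ hKZ => (main K).2 (by rwa [hKZ])⟩
  rintro ⟨Z, hZ⟩
  have hG : IsUnit (C₂barᵀ * C₂bar) :=
    myIsUnit_of_rank _ (by rw [Matrix.rank_transpose_mul_self, hC₂rank])
  have hGi : (C₂barᵀ * C₂bar)⁻¹ * (C₂barᵀ * C₂bar) = 1 :=
    Matrix.nonsing_inv_mul _ ((Matrix.isUnit_iff_isUnit_det _).1 hG)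
  refine ⟨Z * Y⁻¹ * (C₂barᵀ * C₂bar)⁻¹ * C₂barᵀ, (main _).2 ?_⟩
  have hKZ : Z * Y⁻¹ * (C₂barᵀ * C₂bar)⁻¹ * C₂barᵀ * C₂bar * Y = Z := by
    calc Z * Y⁻¹ * (C₂barᵀ * C₂bar)⁻¹ * C₂barᵀ * C₂bar * Y
        = Z * Y⁻¹ * ((C₂barᵀ * C₂bar)⁻¹ * (C₂barᵀ * C₂bar)) * Y := by
          simp only [Matrix.mul_assoc]
      _ = Z * (Y⁻¹ * Y) := by rw [hGi, Matrix.mul_one, Matrix.mul_assoc]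
      _ = Z := by rw [hY1, Matrix.mul_one]
  rwa [hKZ]
end
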